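/- arXiv:1302.5020 — 5 statements merged into one kernel-verified Lean document; each statement's English description precedes it below -/
import Mathlib

section
/- For every integer d ≥ 1 and every noncrossing partition π of [d]: d is an antisingleton of π (i.e., d and 1 lie in the same block of π) if and only if {d} is a singleton block of the Simion–Ullman complement α(π). -/
open Finset Polynomial
open scoped BigOperators

/-- The cyclic successor of `a` on `{1, …, d}`: `d ⊕ 1 = 1`. -/
def cyc (d a : ℕ) : ℕ := if a = d then 1 else a + 1

/-- The cyclic interval `[k, l]` of `{1, …, d}`; it is wrapped when `k > l`. -/
def cyclicInterval (d k l : ℕ) : Finset ℕ :=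
  if k ≤ l then Finset.Icc k l else Finset.Icc k d ∪ Finset.Icc 1 l

/-- `P` is a set partition of `{1, …, d}`, given as its finite set of blocks. -/
def IsPartitionOf (d : ℕ) (P : Finset (Finset ℕ)) : Prop :=
  (∀ B ∈ P, B ⊆ Finset.Icc 1 d ∧ B.Nonempty) ∧
    ∀ x ∈ Finset.Icc 1 d, ∃! B, B ∈ P ∧ x ∈ B

/-- `P` is noncrossing: there are no `a < b < c < e` with `a, c` in one block and
`b, e` in a different block. -/
def Noncrossing (P : Finset (Finset ℕ)) : Prop :=
  ∀ B₁ ∈ P, ∀ B₂ ∈ P, ∀ a b c e : ℕ,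
    a < b → b < c → c < e → a ∈ B₁ → c ∈ B₁ → b ∈ B₂ → e ∈ B₂ → B₁ = B₂

/-- `P` is a noncrossing set partition of `{1, …, d}`. -/
def IsNC (d : ℕ) (P : Finset (Finset ℕ)) : Prop :=
  IsPartitionOf d P ∧ Noncrossing P

open scoped Classical in
/-- The finite set `NC(d)` of noncrossing partitions of `{1, …, d}`. -/
noncomputable def NCd (d : ℕ) : Finset (Finset (Finset ℕ)) :=
  ((Finset.Icc 1 d).powerset.powerset).filter fun P => IsNC d P

/-- `block(π)`: the number of nonsingleton blocks. -/
def blockCount (P : Finset (Finset ℕ)) : ℕ :=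
  (P.filter fun B => 2 ≤ B.card).card

/-- The number of singleton blocks of `P` contained in `U`. -/
def singIn (P : Finset (Finset ℕ)) (U : Finset ℕ) : ℕ :=
  (P.filter fun B => B.card = 1 ∧ B ⊆ U).card

open scoped Classical in
/-- The number of `a ∈ A` that are antisingletons of `P`, i.e. such that `a` and its cyclic
successor lie in the same block of `P`.  Here `A` is the set of starting points of the
internal adjacencies of a family of cyclic intervals. -/
noncomputable def antiIn (d : ℕ) (P : Finset (Finset ℕ)) (A : Finset ℕ) : ℕ :=
  (A.filter fun a => ∃ B ∈ P, a ∈ B ∧ cyc d a ∈ B).card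

/-- The weight `wt_S(π) = x^(block(π) + sing_S(π) + anti_S(π))`, where the family `S`
is recorded by the union `U` of its intervals and the set `A` of starting points of its
internal adjacencies. -/
noncomputable def wt (d : ℕ) (P : Finset (Finset ℕ)) (U A : Finset ℕ) : Polynomial ℚ :=
  X ^ (blockCount P + singIn P U + antiIn d P A)

/-- Four elements of `ZMod n` occur in this cyclic order. -/
def cyclicOrdered (n : ℕ) (a b c e : ZMod n) : Prop :=
  ∃ r : ZMod n, (a - r).val < (b - r).val ∧ (b - r).val < (c - r).val ∧ (c - r).val < (e - r).val

/-- Two blocks on the cycle `ZMod n` cross. -/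
def crosses (n : ℕ) (A B : Finset (ZMod n)) : Prop :=
  ∃ a ∈ A, ∃ c ∈ A, ∃ b ∈ B, ∃ e ∈ B, cyclicOrdered n a b c e

/-- The embedding of `[d]` into the `2d`-cycle: `i ↦ 2i - 1`. -/
def embOrig (d i : ℕ) : ZMod (2 * d) := ((2 * i - 1 : ℕ) : ZMod (2 * d))

/-- The embedding of the copy `[d]'` into the `2d`-cycle: `i' ↦ 2(d - i) mod 2d`. -/
def embCopy (d i : ℕ) : ZMod (2 * d) := ((2 * (d - i) : ℕ) : ZMod (2 * d))

/-- The blocks of `P` (embedded via `embOrig`) together with the blocks of `Q`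
(embedded via `embCopy`) form a noncrossing partition of the `2d`-cycle. -/
def SUCompat (d : ℕ) (P Q : Finset (Finset ℕ)) : Prop :=
  (∀ B₁ ∈ P, ∀ B₂ ∈ P, B₁ ≠ B₂ →
      ¬ crosses (2 * d) (B₁.image (embOrig d)) (B₂.image (embOrig d))) ∧
  (∀ B₁ ∈ Q, ∀ B₂ ∈ Q, B₁ ≠ B₂ →
      ¬ crosses (2 * d) (B₁.image (embCopy d)) (B₂.image (embCopy d))) ∧
  ∀ B₁ ∈ P, ∀ B₂ ∈ Q, ¬ crosses (2 * d) (B₁.image (embOrig d)) (B₂.image (embCopy d))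

/-- `P` refines into `Q`: every block of `P` is contained in a block of `Q`. -/
def refines (P Q : Finset (Finset ℕ)) : Prop :=
  ∀ B ∈ P, ∃ B' ∈ Q, B ⊆ B'

/-- `Q` is the Simion–Ullman complement `α(P)`: it is a partition of `{1, …, d}`
(the copy `[d]'` being identified with `[d]`), the blocks of `P` and `Q` together form a
noncrossing partition of the `2d`-cycle, and `Q` is the coarsest such partition. -/
def IsSUComplement (d : ℕ) (P Q : Finset (Finset ℕ)) : Prop :=
  IsPartitionOf d Q ∧ SUCompat d P Q ∧
    ∀ R, IsPartitionOf d R → SUCompat d P R → refines R Q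

/-- The toric `g`-polynomial of the `j`-dimensional cube:
`g_j(x) = Σ_{m=0}^{⌊j/2⌋} Catalan(j-m)·binom(j-m, m)·(x-1)^m`. -/
noncomputable def gPoly (j : ℕ) : Polynomial ℚ :=
  ∑ m ∈ Finset.range (j / 2 + 1),
    (C ((catalan (j - m) * (j - m).choose m : ℕ) : ℚ)) * (X - 1) ^ m

/-- The polynomial `Q_{d,k}(x)`, `0 ≤ k ≤ d+1`. -/
noncomputable def Qpoly (d k : ℕ) : Polynomial ℚ :=
  if k = 0 then
    (X - 1) ^ (d + 1) +
      ∑ j ∈ Finset.range (d + 1),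
        (C ((2 ^ (d - j) * d.choose j : ℕ) : ℚ)) * (X - 1) ^ (d - j) * gPoly j
  else if k ≤ d then
    ∑ j ∈ Finset.Icc (k - 1) d,
      (C ((2 ^ (d - j) * ((d - k).choose (d - j) + (d + 1 - k).choose (d - j)) : ℕ) : ℚ)) *
        (X - 1) ^ (d - j) * gPoly j
  else gPoly d

/-- The polynomial `C_{d,i,j}(x) = Σ_{k=j+1}^{i+j} (1/2)^i binom(i-1, k-1-j) Q_{d,k}(x)`. -/
noncomputable def Cpoly (d i j : ℕ) : Polynomial ℚ :=
  ∑ k ∈ Finset.Icc (j + 1) (i + j),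
    (C ((1 / 2 : ℚ) ^ i * ((i - 1).choose (k - 1 - j) : ℚ))) * Qpoly d k

/-- `wt_k(π)`: for `1 ≤ k ≤ d` the weight w.r.t. `S = {[k,d]}`; for `k = 0` the weight
w.r.t. the full circle `[1,d]^*`; for `k = d+1` the weight w.r.t. `S = ∅`. -/
noncomputable def wtk (d k : ℕ) (P : Finset (Finset ℕ)) : Polynomial ℚ :=
  if k = 0 then wt d P (Finset.Icc 1 d) (Finset.Icc 1 d)
  else if k ≤ d then wt d P (Finset.Icc k d) (Finset.Icc k d \ {d})
  else wt d P ∅ ∅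

/-- The `t`-th left endpoint of a family of cyclic intervals given as a list of pairs. -/
def nthK (L : List (ℕ × ℕ)) (t : ℕ) : ℕ := (L.getD t (0, 0)).1

/-- The `t`-th right endpoint of a family of cyclic intervals given as a list of pairs. -/
def nthL (L : List (ℕ × ℕ)) (t : ℕ) : ℕ := (L.getD t (0, 0)).2

/-- The list `[(k₁,l₁),…,(k_i,l_i)]` is a family of pairwise disjoint cyclic intervals of
`[d]` in standard form: `1 ≤ k₁ ≤ l₁ < k₂ ≤ l₂ < … < k_i ≤ d`, and either
`k_i ≤ l_i ≤ d` or `1 ≤ l_i < k₁` (only the last interval may be wrapped). -/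
def StandardForm (d : ℕ) (L : List (ℕ × ℕ)) : Prop :=
  L ≠ [] ∧ 1 ≤ nthK L 0 ∧ nthK L (L.length - 1) ≤ d ∧
  (∀ t, t + 1 < L.length → nthK L t ≤ nthL L t ∧ nthL L t < nthK L (t + 1)) ∧
  ((nthK L (L.length - 1) ≤ nthL L (L.length - 1) ∧ nthL L (L.length - 1) ≤ d) ∨
    (1 ≤ nthL L (L.length - 1) ∧ nthL L (L.length - 1) < nthK L 0))

/-- The dual family `S'` of a standard-form family
`S = [(k₁,l₁),…,(k_i,l_i)]`, namely
`S' = [(d-k_i+1, d-l_{i-1}), …, (d-k₂+1, d-l₁), (d-k₁+1, d-l_i)]`,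
where endpoints are taken in `{1, …, d}` cyclically (so `d - l` means `d` when `l = d`). -/
def dualFam (d : ℕ) (L : List (ℕ × ℕ)) : List (ℕ × ℕ) :=
  (List.range L.length).map fun t =>
    (d - nthK L (L.length - 1 - t) + 1,
     d - (nthL L ((2 * L.length - 2 - t) % L.length)) % d)

/-- A (generalized) family of cyclic intervals of `[d]`: the empty family `∅`, the full
circle `[1,d]^*`, or a finite list of cyclic intervals. -/
inductive Fam where
  | empty : Fam
  | full : Fam
  | fam (L : List (ℕ × ℕ)) : Fam

/-- The union of the intervals of a generalized family. -/
def famU (d : ℕ) : Fam → Finset ℕ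
  | Fam.empty => ∅
  | Fam.full => Finset.Icc 1 d
  | Fam.fam L => L.foldr (fun p acc => cyclicInterval d p.1 p.2 ∪ acc) ∅

/-- The set of starting points of internal adjacencies of a generalized family. -/
def famAdj (d : ℕ) : Fam → Finset ℕ
  | Fam.empty => ∅
  | Fam.full => Finset.Icc 1 d
  | Fam.fam L => L.foldr (fun p acc => (cyclicInterval d p.1 p.2 \ {p.2}) ∪ acc) ∅

/-- The dual `S'` of a generalized family `S`, with `∅' = [1,d]^*` and `([1,d]^*)' = ∅`. -/
def famDual (d : ℕ) : Fam → Fam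
  | Fam.empty => Fam.full
  | Fam.full => Fam.empty
  | Fam.fam L => Fam.fam (dualFam d L)

/-- The generalized family is in standard form (`∅` and `[1,d]^*` always are). -/
def FamStd (d : ℕ) : Fam → Prop
  | Fam.empty => True
  | Fam.full => True
  | Fam.fam L => StandardForm d L

/-- `binom(n, r)` for an integer lower entry `r`, which is `0` whenever `r < 0`. -/
def chooseZ (n : ℕ) (r : ℤ) : ℕ := if 0 ≤ r then n.choose r.toNat else 0

private lemma sub_val_eq {n : ℕ} (hn : 0 < n) (u : ℕ) (hu : u < n) (r : ZMod n) :
    ((u : ZMod n) - r).val = if r.val ≤ u then u - r.val else u + n - r.val := by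
  haveI : NeZero n := ⟨hn.ne'⟩
  have hρ : r.val < n := ZMod.val_lt r
  have key : (u : ZMod n) - r = ((u + (n - r.val) : ℕ) : ZMod n) := by
    rw [Nat.cast_add, Nat.cast_sub hρ.le, ZMod.natCast_self, ZMod.natCast_rightInverse r]
    ring
  rw [key, ZMod.val_natCast]
  rcases le_or_gt r.val u with h | h
  · rw [if_pos h]
    have h2 : u + (n - r.val) = (u - r.val) + n := by omega
    rw [h2, Nat.add_mod_right, Nat.mod_eq_of_lt (by omega)]
  · rw [if_neg (not_le.mpr h), Nat.mod_eq_of_lt (by omega)]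
    omega

/-- For `d ≥ 1` and `π ∈ NC(d)`: `d` is an antisingleton of `π`
(i.e. `d` and `1` lie in the same block of `π`) iff `{d}` is a singleton block of the
Simion–Ullman complement `α(π)`. -/
theorem stmt2 (d : ℕ) (hd : 1 ≤ d) (P Q : Finset (Finset ℕ))
    (hP : IsNC d P) (hQ : IsSUComplement d P Q) :
    (∃ B ∈ P, d ∈ B ∧ 1 ∈ B) ↔ ({d} : Finset ℕ) ∈ Q := by
  classical
  have h2d : 0 < 2 * d := by omega
  haveI : NeZero (2 * d) := ⟨by omega⟩
  obtain ⟨⟨hPsub, hPuniq⟩, hPnc⟩ := hP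
  obtain ⟨⟨hQsub, hQuniq⟩, ⟨hPP, hQQ, hPQ⟩, hcoarse⟩ := hQ
  have hordne : ∀ {a b c e : ZMod (2*d)}, cyclicOrdered (2*d) a b c e → a ≠ c ∧ b ≠ e := by
    rintro a b c e ⟨r, h1, h2, h3⟩
    constructor <;> rintro rfl <;> omega
  constructor
  · rintro ⟨B, hB, hdB, h1B⟩
    obtain ⟨B', ⟨hB'Q, hdB'⟩, huB'⟩ := hQuniq d (Finset.mem_Icc.mpr ⟨hd, le_refl d⟩)
    have hB'eq : B' = {d} := by
      apply Finset.eq_singleton_iff_unique_mem.mpr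
      refine ⟨hdB', fun j hj => ?_⟩
      by_contra hjd
      have hjr : 1 ≤ j ∧ j ≤ d := Finset.mem_Icc.mp ((hQsub B' hB'Q).1 hj)
      have hjlt : j < d := lt_of_le_of_ne hjr.2 hjd
      refine hPQ B hB B' hB'Q ?_
      refine ⟨embOrig d 1, Finset.mem_image_of_mem _ h1B,
        embOrig d d, Finset.mem_image_of_mem _ hdB,
        embCopy d j, Finset.mem_image_of_mem _ hj,
        embCopy d d, Finset.mem_image_of_mem _ hdB', ?_⟩
      refine ⟨((1:ℕ) : ZMod (2*d)), ?_, ?_, ?_⟩ <;>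
      · have hρ : (((1:ℕ) : ZMod (2*d))).val = 1 := ZMod.val_natCast_of_lt (by omega)
        have e1 := sub_val_eq h2d (2*1-1) (by omega) ((1:ℕ) : ZMod (2*d))
        have e2 := sub_val_eq h2d (2*(d-j)) (by omega) ((1:ℕ) : ZMod (2*d))
        have e3 := sub_val_eq h2d (2*d-1) (by omega) ((1:ℕ) : ZMod (2*d))
        have e4 := sub_val_eq h2d (2*(d-d)) (by omega) ((1:ℕ) : ZMod (2*d))
        rw [hρ] at e1 e2 e3 e4
        simp only [embOrig, embCopy, e1, e2, e3, e4]
        split_ifs <;> omega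
    exact hB'eq ▸ hB'Q
  · intro hdQ
    by_contra hno
    push_neg at hno
    obtain ⟨B₁, ⟨hB₁P, h1B₁⟩, hu1⟩ := hPuniq 1 (Finset.mem_Icc.mpr ⟨le_refl 1, hd⟩)
    have hdB₁ : d ∉ B₁ := fun hd' => hno B₁ hB₁P hd' h1B₁
    have hB₁ne : B₁.Nonempty := ⟨1, h1B₁⟩
    set m := B₁.max' hB₁ne with hm
    have hm1 : 1 ≤ m := B₁.le_max' 1 h1B₁
    have hmmem : m ∈ B₁ := B₁.max'_mem hB₁ne
    have hmd : m ≤ d := (Finset.mem_Icc.mp ((hPsub B₁ hB₁P).1 hmmem)).2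
    have hmlt : m < d := lt_of_le_of_ne hmd fun h => hdB₁ (h ▸ hmmem)
    set j := d - m with hj
    have hj1 : 1 ≤ j := by omega
    have hjd : j < d := by omega
    have hsep : ∀ B ∈ P, ∀ x ∈ B, ∀ y ∈ B, x ≤ m → m < y → False := by
      intro B hB x hx y hy hxm hmy
      have hxr := Finset.mem_Icc.mp ((hPsub B hB).1 hx)
      have hyr := Finset.mem_Icc.mp ((hPsub B hB).1 hy)
      have hBB₁ : B = B₁ := by
        rcases eq_or_lt_of_le hxr.1 with h1x | h1x
        · exact hu1 B ⟨hB, by rw [h1x]; exact hx⟩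
        · rcases eq_or_lt_of_le hxm with hxe | hxe
          · obtain ⟨Bm, hBm, hum⟩ := hPuniq m (Finset.mem_Icc.mpr ⟨hm1, hmd⟩)
            exact (hum B ⟨hB, hxe ▸ hx⟩).trans (hum B₁ ⟨hB₁P, hmmem⟩).symm
          · exact (hPnc B₁ hB₁P B hB 1 x m y h1x hxe hmy h1B₁ hmmem hx hy).symm
      exact absurd (B₁.le_max' y (hBB₁ ▸ hy)) (by omega)
    set M : Finset ℕ := {d, j} with hM
    set R : Finset (Finset ℕ) :=
      insert M ((Finset.Icc 1 d \ M).image fun x => ({x} : Finset ℕ)) with hR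
    have hjM : j ∈ M := by rw [hM]; simp
    have hdM : d ∈ M := by rw [hM]; simp
    have hMsub : M ⊆ Finset.Icc 1 d := by
      intro x hx
      rw [hM, Finset.mem_insert, Finset.mem_singleton] at hx
      rcases hx with h | h <;> subst h <;> exact Finset.mem_Icc.mpr (by omega)
    have hMR : M ∈ R := by rw [hR]; exact Finset.mem_insert_self _ _
    have hRmem : ∀ B ∈ R, B = M ∨ ∃ x, x ∈ Finset.Icc 1 d ∧ x ∉ M ∧ B = {x} := by
      intro B hB
      rw [hR, Finset.mem_insert] at hB
      rcases hB with h | h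
      · exact Or.inl h
      · right
        obtain ⟨x, hx, hxe⟩ := Finset.mem_image.mp h
        rw [Finset.mem_sdiff] at hx
        exact ⟨x, hx.1, hx.2, hxe.symm⟩
    have hRpart : IsPartitionOf d R := by
      constructor
      · intro B hB
        rcases hRmem B hB with h | ⟨x, hx, hxM, h⟩
        · exact h ▸ ⟨hMsub, ⟨d, hdM⟩⟩
        · subst h
          exact ⟨by simpa using hx, ⟨x, Finset.mem_singleton_self x⟩⟩
      · intro x hx
        by_cases hxM : x ∈ M
        · refine ⟨M, ⟨hMR, hxM⟩, ?_⟩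
          rintro B ⟨hB, hxB⟩
          rcases hRmem B hB with h | ⟨y, hy, hyM, h⟩
          · exact h
          · subst h
            rw [Finset.mem_singleton] at hxB
            exact absurd (hxB ▸ hxM) hyM
        · refine ⟨{x}, ⟨?_, Finset.mem_singleton_self x⟩, ?_⟩
          · rw [hR]
            exact Finset.mem_insert_of_mem
              (Finset.mem_image_of_mem _ (Finset.mem_sdiff.mpr ⟨hx, hxM⟩))
          · rintro B ⟨hB, hxB⟩
            rcases hRmem B hB with h | ⟨y, hy, hyM, h⟩
            · exact absurd (h ▸ hxB) hxM
            · subst h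
              rw [Finset.mem_singleton] at hxB
              rw [hxB]
    have hsingR : ∀ (A : Finset (ZMod (2*d))) (x : ℕ),
        ¬ crosses (2*d) A (({x} : Finset ℕ).image (embCopy d)) := by
      rintro A x ⟨a, ha, c, hc, b, hb, e, he, hord⟩
      simp only [Finset.image_singleton, Finset.mem_singleton] at hb he
      exact (hordne hord).2 (hb.trans he.symm)
    have hsingL : ∀ (x : ℕ) (A : Finset (ZMod (2*d))),
        ¬ crosses (2*d) (({x} : Finset ℕ).image (embCopy d)) A := by
      rintro x A ⟨a, ha, c, hc, b, hb, e, he, hord⟩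
      simp only [Finset.image_singleton, Finset.mem_singleton] at ha hc
      exact (hordne hord).1 (ha.trans hc.symm)
    have hPM : ∀ B ∈ P, ¬ crosses (2*d) (B.image (embOrig d)) (M.image (embCopy d)) := by
      rintro B hB ⟨a, ha, c, hc, b, hb, e, he, hord⟩
      obtain ⟨x, hx, rfl⟩ := Finset.mem_image.mp ha
      obtain ⟨y, hy, rfl⟩ := Finset.mem_image.mp hc
      obtain ⟨z, hz, rfl⟩ := Finset.mem_image.mp hb
      obtain ⟨w, hw, rfl⟩ := Finset.mem_image.mp he
      have hxr := Finset.mem_Icc.mp ((hPsub B hB).1 hx)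
      have hyr := Finset.mem_Icc.mp ((hPsub B hB).1 hy)
      have hzM : z = d ∨ z = j := by
        rw [hM, Finset.mem_insert, Finset.mem_singleton] at hz; exact hz
      have hwM : w = d ∨ w = j := by
        rw [hM, Finset.mem_insert, Finset.mem_singleton] at hw; exact hw
      have hz1 : 1 ≤ z := by rcases hzM with rfl | rfl <;> omega
      have hw1 : 1 ≤ w := by rcases hwM with rfl | rfl <;> omega
      obtain ⟨r, h1, h2, h3⟩ := hord
      have hρ : r.val < 2*d := ZMod.val_lt r
      have e1 := sub_val_eq h2d (2*x-1) (by omega) r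
      have e3 := sub_val_eq h2d (2*y-1) (by omega) r
      have e2 := sub_val_eq h2d (2*(d-z)) (by omega) r
      have e4 := sub_val_eq h2d (2*(d-w)) (by omega) r
      simp only [embOrig, embCopy] at h1 h2 h3
      rw [e1, e2] at h1
      rw [e2, e3] at h2
      rw [e3, e4] at h3
      rcases le_or_gt x m with hxm | hxm <;> rcases le_or_gt y m with hym | hym
      · rcases hzM with rfl | rfl <;> rcases hwM with rfl | rfl <;>
          (split_ifs at h1 h2 h3 <;> omega)
      · exact hsep B hB x hx y hy hxm hym
      · exact hsep B hB y hy x hx hym hxm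
      · rcases hzM with rfl | rfl <;> rcases hwM with rfl | rfl <;>
          (split_ifs at h1 h2 h3 <;> omega)
    have hRR : ∀ B₁' ∈ R, ∀ B₂' ∈ R, B₁' ≠ B₂' →
        ¬ crosses (2*d) (B₁'.image (embCopy d)) (B₂'.image (embCopy d)) := by
      intro B₁' hB₁' B₂' hB₂' hne
      rcases hRmem B₂' hB₂' with h | ⟨x, _, _, h⟩
      · rcases hRmem B₁' hB₁' with h' | ⟨x, _, _, h'⟩
        · exact absurd (h'.trans h.symm) hne
        · subst h'; exact hsingL x _
      · subst h; exact hsingR _ x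
    have hPR : ∀ B₁' ∈ P, ∀ B₂' ∈ R,
        ¬ crosses (2*d) (B₁'.image (embOrig d)) (B₂'.image (embCopy d)) := by
      intro B₁' hB₁' B₂' hB₂'
      rcases hRmem B₂' hB₂' with h | ⟨x, _, _, h⟩
      · subst h; exact hPM B₁' hB₁'
      · subst h; exact hsingR _ x
    have href := hcoarse R hRpart ⟨hPP, hRR, hPR⟩
    obtain ⟨B', hB'Q, hsub⟩ := href M hMR
    obtain ⟨B₀, ⟨hB₀Q, hdB₀⟩, hu₀⟩ := hQuniq d (Finset.mem_Icc.mpr ⟨hd, le_refl d⟩)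
    have h1' : B' = B₀ := hu₀ B' ⟨hB'Q, hsub hdM⟩
    have h2' : ({d} : Finset ℕ) = B₀ := hu₀ {d} ⟨hdQ, Finset.mem_singleton_self d⟩
    have hjd' : j ∈ ({d} : Finset ℕ) := by rw [h2', ← h1']; exact hsub hjM
    rw [Finset.mem_singleton] at hjd'
    omega
end

section
/- For every integer d ≥ 1 and every integer k ≥ 0, the number of noncrossing partitions of [d] with exactly k nonsingleton blocks equals the coefficient of x^k in g_d(x); equivalently, Σ_{π ∈ NC(d)} x^{block(π)} = g_d(x) in ℚ[x]. -/
open Finset Polynomial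
open scoped BigOperators

/-!
Write `P_n(x) = Σ_{π ∈ NC(n)} x^{block(π)}`. Either `{1}` is a block of `π`, and removing it
leaves a noncrossing partition of the other `n - 1` points, or `1` has a successor `j` in its
block. In the second case noncrossing forces every other block into `[2, j-1]` or `[j, n]`, so
`π` splits into a noncrossing partition of `[2, j-1]` and, after deleting `1`, one of `[j, n]`;
a nonsingleton block is lost exactly when the block of `j` becomes `{j}`. Hence `P_0 = 1` and
`P_{n+1} = Σ_{a+b=n} P_a P_b + (x-1) Σ_{a+b=n-1} P_a P_b`.

With `y = x - 1`, `g_n(y+1) = Σ_m Catalan(n-m) binom(n-m, m) y^m` is the coefficient of `t^n` in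
`C(t + y t²)`, where `C(u) = Σ_k Catalan(k) u^k` satisfies `C = 1 + u C²`; comparing coefficients
(Vandermonde and the Catalan recurrence) shows that the `g_n` obey the same recurrence.
-/

def IsPartitionOn (s : Finset ℕ) (P : Finset (Finset ℕ)) : Prop :=
  (∀ B ∈ P, B ⊆ s ∧ B.Nonempty) ∧ ∀ x ∈ s, ∃! B, B ∈ P ∧ x ∈ B

open scoped Classical in
noncomputable def ncOn (s : Finset ℕ) : Finset (Finset (Finset ℕ)) :=
  s.powerset.powerset.filter fun P => IsPartitionOn s P ∧ Noncrossing P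

noncomputable def ncPoly (s : Finset ℕ) : ℚ[X] :=
  ∑ P ∈ ncOn s, X ^ blockCount P

open scoped Classical in
lemma mem_ncOn {s : Finset ℕ} {P : Finset (Finset ℕ)} :
    P ∈ ncOn s ↔ IsPartitionOn s P ∧ Noncrossing P := by
  refine ⟨fun h => (mem_filter.1 h).2, fun h => mem_filter.2 ⟨?_, h⟩⟩
  exact mem_powerset.2 fun B hB => mem_powerset.2 (h.1.1 B hB).1

open scoped Classical in
lemma NCd_eq_ncOn (d : ℕ) : NCd d = ncOn (Icc 1 d) := by
  ext P
  rw [mem_ncOn, NCd, mem_filter]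
  exact ⟨fun h => h.2,
    fun h => ⟨mem_powerset.2 fun B hB => mem_powerset.2 (h.1.1 B hB).1, h⟩⟩

namespace IsPartitionOn

variable {s : Finset ℕ} {P : Finset (Finset ℕ)}

lemma subset (h : IsPartitionOn s P) {B : Finset ℕ} (hB : B ∈ P) : B ⊆ s := (h.1 B hB).1

lemma nonempty (h : IsPartitionOn s P) {B : Finset ℕ} (hB : B ∈ P) : B.Nonempty := (h.1 B hB).2

lemma eq_of_mem (h : IsPartitionOn s P) {B B' : Finset ℕ} {x : ℕ} (hB : B ∈ P)
    (hB' : B' ∈ P) (hx : x ∈ B) (hx' : x ∈ B') : B = B' :=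
  (h.2 x (h.subset hB hx)).unique ⟨hB, hx⟩ ⟨hB', hx'⟩

lemma exists_mem (h : IsPartitionOn s P) {x : ℕ} (hx : x ∈ s) : ∃ B ∈ P, x ∈ B :=
  let ⟨B, hB, _⟩ := h.2 x hx; ⟨B, hB⟩

lemma mk' {P : Finset (Finset ℕ)} (hsub : ∀ B ∈ P, B ⊆ s ∧ B.Nonempty)
    (hcover : ∀ x ∈ s, ∃ B ∈ P, x ∈ B)
    (hdisj : ∀ B ∈ P, ∀ B' ∈ P, ∀ x ∈ B, x ∈ B' → B = B') : IsPartitionOn s P := by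
  refine ⟨hsub, fun x hx => ?_⟩
  obtain ⟨B, hB, hxB⟩ := hcover x hx
  exact ⟨B, ⟨hB, hxB⟩, fun B' hB' => hdisj B' hB'.1 B hB x hB'.2 hxB⟩

lemma union {t : Finset ℕ} {Q : Finset (Finset ℕ)} (hP : IsPartitionOn s P)
    (hQ : IsPartitionOn t Q) (hst : Disjoint s t) : IsPartitionOn (s ∪ t) (P ∪ Q) := by
  refine mk' (fun B hB => ?_) (fun x hx => ?_) fun B hB B' hB' x hx hx' => ?_
  · rcases mem_union.1 hB with hB | hB
    · exact ⟨(hP.subset hB).trans subset_union_left, hP.nonempty hB⟩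
    · exact ⟨(hQ.subset hB).trans subset_union_right, hQ.nonempty hB⟩
  · rcases mem_union.1 hx with hx | hx
    · obtain ⟨B, hB, hxB⟩ := hP.exists_mem hx
      exact ⟨B, mem_union_left _ hB, hxB⟩
    · obtain ⟨B, hB, hxB⟩ := hQ.exists_mem hx
      exact ⟨B, mem_union_right _ hB, hxB⟩
  · rcases mem_union.1 hB with hB | hB <;> rcases mem_union.1 hB' with hB' | hB'
    · exact hP.eq_of_mem hB hB' hx hx'
    · exact absurd (hQ.subset hB' hx') (disjoint_left.1 hst (hP.subset hB hx))
    · exact absurd (hQ.subset hB hx) (disjoint_left.1 hst (hP.subset hB' hx'))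
    · exact hQ.eq_of_mem hB hB' hx hx'

lemma filter_subset (h : IsPartitionOn s P) {t : Finset ℕ} (hts : t ⊆ s)
    (ht : ∀ B ∈ P, ∀ x ∈ B, x ∈ t → B ⊆ t) :
    IsPartitionOn t (P.filter (· ⊆ t)) := by
  refine mk' (fun B hB => ?_) (fun x hx => ?_) fun B hB B' hB' x hx hx' => ?_
  · exact ⟨(mem_filter.1 hB).2, h.nonempty (mem_filter.1 hB).1⟩
  · obtain ⟨B, hB, hxB⟩ := h.exists_mem (hts hx)
    exact ⟨B, mem_filter.2 ⟨hB, ht B hB x hxB hx⟩, hxB⟩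
  · exact h.eq_of_mem (mem_filter.1 hB).1 (mem_filter.1 hB').1 hx hx'

lemma image_erase (h : IsPartitionOn s P) {m : ℕ} (hm : {m} ∉ P) :
    IsPartitionOn (s.erase m) (P.image (·.erase m)) := by
  refine mk' (fun B hB => ?_) (fun x hx => ?_) fun B hB B' hB' x hx hx' => ?_
  · obtain ⟨C, hC, rfl⟩ := mem_image.1 hB
    refine ⟨erase_subset_erase m (h.subset hC), ?_⟩
    by_cases hmC : m ∈ C
    · exact (erase_nonempty hmC).2
        ((nontrivial_iff_ne_singleton hmC).2 (ne_of_mem_of_not_mem hC hm))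
    · rw [erase_eq_of_notMem hmC]; exact h.nonempty hC
  · obtain ⟨B, hB, hxB⟩ := h.exists_mem (mem_of_mem_erase hx)
    exact ⟨B.erase m, mem_image_of_mem _ hB, mem_erase.2 ⟨ne_of_mem_erase hx, hxB⟩⟩
  · obtain ⟨C, hC, rfl⟩ := mem_image.1 hB
    obtain ⟨C', hC', rfl⟩ := mem_image.1 hB'
    rw [h.eq_of_mem hC hC' (mem_of_mem_erase hx) (mem_of_mem_erase hx')]

lemma not_subset (h : IsPartitionOn s P) {t : Finset ℕ} (hst : Disjoint s t) {B : Finset ℕ}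
    (hB : B ∈ P) : ¬ B ⊆ t := fun hBt => by
  obtain ⟨x, hx⟩ := h.nonempty hB
  exact disjoint_left.1 hst (h.subset hB hx) (hBt hx)

lemma disjoint {t : Finset ℕ} {Q : Finset (Finset ℕ)} (hP : IsPartitionOn s P)
    (hQ : IsPartitionOn t Q) (hst : Disjoint s t) : Disjoint P Q :=
  disjoint_left.2 fun _ hBP hBQ => hP.not_subset hst hBP (hQ.subset hBQ)

end IsPartitionOn

lemma ncPoly_empty : ncPoly ∅ = 1 := by
  have : ncOn ∅ = {∅} := by
    ext P
    simp only [mem_ncOn, mem_singleton]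
    refine ⟨fun h => eq_empty_of_forall_notMem fun B hB => ?_, ?_⟩
    · obtain ⟨x, hx⟩ := h.1.nonempty hB
      exact notMem_empty x (h.1.subset hB hx)
    · rintro rfl
      simp [IsPartitionOn, Noncrossing]
  simp [ncPoly, this, blockCount]

namespace Noncrossing

variable {P : Finset (Finset ℕ)}

lemma mono {Q : Finset (Finset ℕ)} (h : Noncrossing P) (hQP : Q ⊆ P) : Noncrossing Q :=
  fun B₁ h₁ B₂ h₂ => h B₁ (hQP h₁) B₂ (hQP h₂)

lemma image_of_subset (h : Noncrossing P) {f : Finset ℕ → Finset ℕ} (hf : ∀ B, f B ⊆ B) :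
    Noncrossing (P.image f) := by
  intro C₁ h₁ C₂ h₂ a b c e hab hbc hce ha hc hb he
  obtain ⟨B₁, hB₁, rfl⟩ := mem_image.1 h₁
  obtain ⟨B₂, hB₂, rfl⟩ := mem_image.1 h₂
  rw [h B₁ hB₁ B₂ hB₂ a b c e hab hbc hce (hf _ ha) (hf _ hc) (hf _ hb) (hf _ he)]

lemma union {Q : Finset (Finset ℕ)} {s t : Finset ℕ} (hP : Noncrossing P) (hQ : Noncrossing Q)
    (hPs : ∀ B ∈ P, B ⊆ s) (hQt : ∀ B ∈ Q, B ⊆ t)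
    (hgap : ∀ a ∈ s, ∀ b ∈ s, ∀ x ∈ t, ¬ (a < x ∧ x < b)) :
    Noncrossing (P ∪ Q) := by
  intro C₁ h₁ C₂ h₂ a b c e hab hbc hce ha hc hb he
  rcases mem_union.1 h₁ with h₁ | h₁ <;> rcases mem_union.1 h₂ with h₂ | h₂
  · exact hP _ h₁ _ h₂ a b c e hab hbc hce ha hc hb he
  · exact absurd ⟨hab, hbc⟩ (hgap a (hPs _ h₁ ha) c (hPs _ h₁ hc) b (hQt _ h₂ hb))
  · exact absurd ⟨hbc, hce⟩ (hgap b (hPs _ h₂ hb) e (hPs _ h₂ he) c (hQt _ h₁ hc))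
  · exact hQ _ h₁ _ h₂ a b c e hab hbc hce ha hc hb he

end Noncrossing

lemma blockCount_union {P Q : Finset (Finset ℕ)} (h : Disjoint P Q) :
    blockCount (P ∪ Q) = blockCount P + blockCount Q := by
  rw [blockCount, filter_union, card_union_of_disjoint (disjoint_filter_filter h), blockCount,
    blockCount]

/-- Mapped over the blocks of a partition, this adds `m` to the block containing `j`. -/
def addToBlockOf (j m : ℕ) (B : Finset ℕ) : Finset ℕ := if j ∈ B then insert m B else B

section addToBlockOf

variable {j m : ℕ} {t : Finset ℕ} {P : Finset (Finset ℕ)}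

lemma mem_addToBlockOf {B : Finset ℕ} {x : ℕ} :
    x ∈ addToBlockOf j m B ↔ x ∈ B ∨ x = m ∧ j ∈ B := by
  unfold addToBlockOf; split_ifs with h <;> simp [h, or_comm]

lemma subset_addToBlockOf (B : Finset ℕ) : B ⊆ addToBlockOf j m B :=
  fun _ hx => mem_addToBlockOf.2 (Or.inl hx)

lemma erase_addToBlockOf {B : Finset ℕ} (hm : m ∉ B) : (addToBlockOf j m B).erase m = B := by
  unfold addToBlockOf; split_ifs
  · exact erase_insert hm
  · exact erase_eq_of_notMem hm

lemma addToBlockOf_erase {B : Finset ℕ} (hjm : j ≠ m) (h : j ∈ B ↔ m ∈ B) :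
    addToBlockOf j m (B.erase m) = B := by
  by_cases hm : m ∈ B
  · rw [addToBlockOf, if_pos (mem_erase.2 ⟨hjm, h.2 hm⟩), insert_erase hm]
  · rw [addToBlockOf, if_neg fun hj => hm (h.1 (mem_of_mem_erase hj)), erase_eq_of_notMem hm]

lemma IsPartitionOn.image_addToBlockOf (h : IsPartitionOn t P) (hj : j ∈ t) (hm : m ∉ t) :
    IsPartitionOn (insert m t) (P.image (addToBlockOf j m)) := by
  obtain ⟨Bj, hBj, hjBj⟩ := h.exists_mem hj
  refine IsPartitionOn.mk' (fun B hB => ?_) (fun x hx => ?_)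
    fun B hB B' hB' x hx hx' => ?_
  · obtain ⟨C, hC, rfl⟩ := mem_image.1 hB
    refine ⟨fun x hx => ?_, (h.nonempty hC).mono (subset_addToBlockOf C)⟩
    rcases mem_addToBlockOf.1 hx with hx | ⟨rfl, -⟩
    · exact mem_insert_of_mem (h.subset hC hx)
    · exact mem_insert_self _ _
  · rcases mem_insert.1 hx with rfl | hx
    · exact ⟨_, mem_image_of_mem _ hBj, mem_addToBlockOf.2 (Or.inr ⟨rfl, hjBj⟩)⟩
    · obtain ⟨B, hB, hxB⟩ := h.exists_mem hx
      exact ⟨_, mem_image_of_mem _ hB, subset_addToBlockOf B hxB⟩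
  · obtain ⟨C, hC, rfl⟩ := mem_image.1 hB
    obtain ⟨C', hC', rfl⟩ := mem_image.1 hB'
    congr 1
    rcases mem_addToBlockOf.1 hx with hx | ⟨rfl, hjC⟩ <;>
      rcases mem_addToBlockOf.1 hx' with hx' | ⟨hxm, hjC'⟩
    · exact h.eq_of_mem hC hC' hx hx'
    · exact absurd (hxm ▸ h.subset hC hx) hm
    · exact absurd (h.subset hC' hx') hm
    · exact h.eq_of_mem hC hC' hjC hjC'

lemma Noncrossing.image_addToBlockOf (hnc : Noncrossing P) (h : IsPartitionOn t P)
    (hjt : ∀ x ∈ t, j ≤ x) (hmj : m < j) : Noncrossing (P.image (addToBlockOf j m)) := by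
  intro C₁ h₁ C₂ h₂ a b c e hab hbc hce ha hc hb he
  obtain ⟨B₁, hB₁, rfl⟩ := mem_image.1 h₁
  obtain ⟨B₂, hB₂, rfl⟩ := mem_image.1 h₂
  congr 1
  -- only `a` can be the new element `m`; a crossing through it moves to `j = min t`
  have hlt : ∀ {B x}, x ∈ addToBlockOf j m B → m < x → x ∈ B := fun hx hmx =>
    (mem_addToBlockOf.1 hx).resolve_right fun h => hmx.ne' h.1
  have hma : m ≤ a := by
    rcases mem_addToBlockOf.1 ha with ha | ⟨rfl, -⟩
    exacts [(hmj.trans_le (hjt a (h.subset hB₁ ha))).le, le_rfl]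
  have hb' := hlt hb (by omega)
  have hc' := hlt hc (by omega)
  have he' := hlt he (by omega)
  rcases mem_addToBlockOf.1 ha with ha' | ⟨rfl, hjB₁⟩
  · exact hnc B₁ hB₁ B₂ hB₂ a b c e hab hbc hce ha' hc' hb' he'
  · by_contra hne
    have hjb : j < b := (hjt b (h.subset hB₂ hb')).lt_of_ne fun hjb =>
      hne (h.eq_of_mem hB₁ hB₂ hjB₁ (hjb ▸ hb'))
    exact hne (hnc B₁ hB₁ B₂ hB₂ j b c e hjb hbc hce hjB₁ hc' hb' he')

lemma image_addToBlockOf_mem_ncOn (h : P ∈ ncOn t) (hj : j ∈ t) (hjt : ∀ x ∈ t, j ≤ x)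
    (hmj : m < j) : P.image (addToBlockOf j m) ∈ ncOn (insert m t) :=
  mem_ncOn.2 ⟨(mem_ncOn.1 h).1.image_addToBlockOf hj fun hm => (hjt m hm).not_gt hmj,
    (mem_ncOn.1 h).2.image_addToBlockOf (mem_ncOn.1 h).1 hjt hmj⟩

lemma blockCount_image_addToBlockOf (h : IsPartitionOn t P) (hm : m ∉ t) :
    blockCount (P.image (addToBlockOf j m)) = blockCount P + if {j} ∈ P then 1 else 0 := by
  have hinj : Set.InjOn (addToBlockOf j m) P := fun B hB B' hB' hBB' => by
    rw [← erase_addToBlockOf (fun hmB => hm (h.subset hB hmB)),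
      ← erase_addToBlockOf (j := j) (fun hmB => hm (h.subset hB' hmB)), hBB']
  have hcard : ∀ B ∈ P, (if 2 ≤ (addToBlockOf j m B).card then 1 else 0)
      = (if 2 ≤ B.card then 1 else 0) + if B = {j} then 1 else 0 := by
    intro B hB
    by_cases hjB : j ∈ B
    · have hmB : m ∉ B := fun hmB => hm (h.subset hB hmB)
      have h1 : 1 ≤ B.card := card_pos.2 ⟨j, hjB⟩
      rw [addToBlockOf, if_pos hjB, card_insert_of_notMem hmB, if_pos (by omega)]
      by_cases hBj : B = {j}
      · simp [hBj]
      · have h2 : 2 ≤ B.card :=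
          one_lt_card_iff_nontrivial.2 ((nontrivial_iff_ne_singleton hjB).2 hBj)
        rw [if_pos h2, if_neg hBj]
    · have hBj : B ≠ {j} := by rintro rfl; exact hjB (mem_singleton_self j)
      simp [addToBlockOf, hjB, hBj]
  simp only [blockCount, card_filter, sum_image hinj, sum_congr rfl hcard, sum_add_distrib,
    sum_ite_eq']

end addToBlockOf

section singleton

variable {s : Finset ℕ} {m : ℕ}

lemma singleton_mem_ncOn (m : ℕ) : {{m}} ∈ ncOn {m} := by
  refine mem_ncOn.2 ⟨IsPartitionOn.mk' (by simp) (by simp) (by simp), ?_⟩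
  intro B₁ h₁ B₂ h₂
  rw [mem_singleton.1 h₁, mem_singleton.1 h₂]
  simp

lemma insert_singleton_mem_ncOn (hm : m ∈ s) {Q : Finset (Finset ℕ)}
    (hQ : Q ∈ ncOn (s.erase m)) : insert {m} Q ∈ ncOn s := by
  obtain ⟨hQp, hQnc⟩ := mem_ncOn.1 hQ
  obtain ⟨hmp, hmnc⟩ := mem_ncOn.1 (singleton_mem_ncOn m)
  rw [← insert_erase hm, insert_eq, insert_eq]
  refine mem_ncOn.2 ⟨hmp.union hQp (disjoint_singleton_left.2 (notMem_erase m s)), ?_⟩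
  refine hmnc.union hQnc (fun B hB => hmp.subset hB) (fun B hB => hQp.subset hB) ?_
  simp only [mem_singleton, mem_erase]
  omega

lemma filter_mem_ncOn_erase {P : Finset (Finset ℕ)} (hP : P ∈ ncOn s) (hmP : {m} ∈ P) :
    P.filter (· ⊆ s.erase m) ∈ ncOn (s.erase m) := by
  obtain ⟨hPp, hPnc⟩ := mem_ncOn.1 hP
  refine mem_ncOn.2 ⟨hPp.filter_subset (erase_subset m s) fun B hB x hxB hx => ?_,
    hPnc.mono (filter_subset _ _)⟩
  intro y hy
  refine mem_erase.2 ⟨fun hym => ?_, hPp.subset hB hy⟩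
  subst hym
  rw [hPp.eq_of_mem hB hmP hy (mem_singleton_self _)] at hxB
  exact (mem_erase.1 hx).1 (mem_singleton.1 hxB)

lemma insert_singleton_filter_subset_erase {P : Finset (Finset ℕ)} (hP : P ∈ ncOn s)
    (hmP : {m} ∈ P) : P = insert {m} (P.filter (· ⊆ s.erase m)) := by
  have hPp := (mem_ncOn.1 hP).1
  ext B
  simp only [mem_insert, mem_filter]
  refine ⟨fun hB => ?_, by rintro (rfl | ⟨hB, -⟩) <;> assumption⟩
  by_cases hmB : m ∈ B
  · exact Or.inl (hPp.eq_of_mem hB hmP hmB (mem_singleton_self m))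
  · exact Or.inr ⟨hB, fun y hy => mem_erase.2 ⟨fun h => hmB (h ▸ hy), hPp.subset hB hy⟩⟩

lemma sum_filter_singleton_mem (hm : m ∈ s) :
    ∑ P ∈ (ncOn s).filter ({m} ∈ ·), (X : ℚ[X]) ^ blockCount P = ncPoly (s.erase m) := by
  refine sum_nbij' (·.filter (· ⊆ s.erase m)) (insert {m}) (fun P hP => ?_)
    (fun Q hQ => ?_) (fun P hP => ?_) (fun Q hQ => ?_) (fun P hP => ?_)
  · exact filter_mem_ncOn_erase (mem_filter.1 hP).1 (mem_filter.1 hP).2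
  · exact mem_filter.2 ⟨insert_singleton_mem_ncOn hm hQ, mem_insert_self _ _⟩
  · exact (insert_singleton_filter_subset_erase (mem_filter.1 hP).1 (mem_filter.1 hP).2).symm
  · rw [filter_insert, if_neg fun h => notMem_erase m s (h (mem_singleton_self m))]
    exact filter_true_of_mem fun B hB => (mem_ncOn.1 hQ).1.subset hB
  · obtain ⟨hP, hmP⟩ := mem_filter.1 hP
    conv_lhs => rw [insert_singleton_filter_subset_erase hP hmP]
    rw [blockCount, filter_insert, if_neg (by simp), blockCount]

lemma ncPoly_eq_erase_add (hm : m ∈ s) :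
    ncPoly s = ncPoly (s.erase m) + ∑ P ∈ (ncOn s).filter ({m} ∉ ·), X ^ blockCount P := by
  rw [ncPoly, ← sum_filter_add_sum_filter_not (ncOn s) ({m} ∈ ·), sum_filter_singleton_mem hm]

lemma sum_ncOn_mul_ite_singleton_mem (hm : m ∈ s) :
    ∑ Q ∈ ncOn s, X ^ blockCount Q * (if {m} ∈ Q then X else 1) =
      ncPoly s + (X - 1) * ncPoly (s.erase m) := by
  have hmem : ∑ Q ∈ (ncOn s).filter ({m} ∈ ·),
      (X : ℚ[X]) ^ blockCount Q * (if {m} ∈ Q then X else 1) = ncPoly (s.erase m) * X := by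
    rw [← sum_filter_singleton_mem hm, sum_mul]
    exact sum_congr rfl fun Q hQ => by rw [if_pos (mem_filter.1 hQ).2]
  have hnotMem : ∑ Q ∈ (ncOn s).filter ({m} ∉ ·),
      (X : ℚ[X]) ^ blockCount Q * (if {m} ∈ Q then X else 1) =
        ∑ Q ∈ (ncOn s).filter ({m} ∉ ·), X ^ blockCount Q :=
    sum_congr rfl fun Q hQ => by rw [if_neg (mem_filter.1 hQ).2, mul_one]
  rw [← sum_filter_add_sum_filter_not (ncOn s) ({m} ∈ ·), hmem, hnotMem,
    ncPoly_eq_erase_add hm]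
  ring

end singleton

section relabel

variable {s : Finset ℕ} {f g : ℕ → ℕ}

lemma image_image_of_leftInvOn (hgf : Set.LeftInvOn g f s) {B : Finset ℕ} (hB : B ⊆ s) :
    (B.image f).image g = B := by
  rw [image_image]
  exact (image_congr fun x hx => hgf (hB hx)).trans image_id'

lemma blockCount_image_image (hf : Set.InjOn f s) {P : Finset (Finset ℕ)}
    (hP : ∀ B ∈ P, B ⊆ s) : blockCount (P.image (image f)) = blockCount P := by
  have hinj : Set.InjOn (image f) P := fun B hB B' hB' =>
    image_injOn_powerset_of_injOn hf (mem_powerset.2 (hP B hB)) (mem_powerset.2 (hP B' hB'))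
  simp only [blockCount, card_filter, sum_image hinj]
  exact sum_congr rfl fun B hB => by rw [card_image_of_injOn (hf.mono (hP B hB))]

lemma image_mem_ncOn (hf : StrictMonoOn f s) {P : Finset (Finset ℕ)} (hP : P ∈ ncOn s) :
    P.image (image f) ∈ ncOn (s.image f) := by
  obtain ⟨hPp, hPnc⟩ := mem_ncOn.1 hP
  have hs : ∀ {B}, B ∈ P → ∀ {x}, x ∈ B → x ∈ s := fun hB _ hx => hPp.subset hB hx
  refine mem_ncOn.2 ⟨IsPartitionOn.mk' (fun B hB => ?_) (fun y hy => ?_)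
    (fun B hB B' hB' y hy hy' => ?_),
    fun C₁ h₁ C₂ h₂ a b c e hab hbc hce ha hc hb he => ?_⟩
  · obtain ⟨C, hC, rfl⟩ := mem_image.1 hB
    exact ⟨image_subset_image (hPp.subset hC), (hPp.nonempty hC).image f⟩
  · obtain ⟨x, hx, rfl⟩ := mem_image.1 hy
    obtain ⟨B, hB, hxB⟩ := hPp.exists_mem hx
    exact ⟨_, mem_image_of_mem _ hB, mem_image_of_mem f hxB⟩
  · obtain ⟨C, hC, rfl⟩ := mem_image.1 hB
    obtain ⟨C', hC', rfl⟩ := mem_image.1 hB'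
    obtain ⟨x, hx, rfl⟩ := mem_image.1 hy
    obtain ⟨x', hx', hxx'⟩ := mem_image.1 hy'
    rw [hPp.eq_of_mem hC hC' hx (hf.injOn (hs hC' hx') (hs hC hx) hxx' ▸ hx')]
  · obtain ⟨B₁, hB₁, rfl⟩ := mem_image.1 h₁
    obtain ⟨B₂, hB₂, rfl⟩ := mem_image.1 h₂
    obtain ⟨a, ha', rfl⟩ := mem_image.1 ha
    obtain ⟨b, hb', rfl⟩ := mem_image.1 hb
    obtain ⟨c, hc', rfl⟩ := mem_image.1 hc
    obtain ⟨e, he', rfl⟩ := mem_image.1 he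
    have hlt := fun {B B'} (hB : B ∈ P) (hB' : B' ∈ P) {x y} (hx : x ∈ B) (hy : y ∈ B') =>
      (hf.lt_iff_lt (hs hB hx) (hs hB' hy)).1
    rw [hPnc B₁ hB₁ B₂ hB₂ a b c e (hlt hB₁ hB₂ ha' hb' hab)
      (hlt hB₂ hB₁ hb' hc' hbc) (hlt hB₁ hB₂ hc' he' hce) ha' hc' hb' he']

lemma ncPoly_image (hf : StrictMonoOn f s) : ncPoly (s.image f) = ncPoly s := by
  set g := Function.invFunOn f s
  have hgf : Set.LeftInvOn g f s := hf.injOn.leftInvOn_invFunOn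
  have hfg : Set.LeftInvOn f g (s.image f) := by
    intro _ hy
    obtain ⟨x, hx, rfl⟩ := mem_image.1 hy
    rw [hgf hx]
  have hg : StrictMonoOn g (s.image f) := by
    intro _ hx _ hy hxy
    obtain ⟨x, hx', rfl⟩ := mem_image.1 hx
    obtain ⟨y, hy', rfl⟩ := mem_image.1 hy
    rw [hgf hx', hgf hy']
    exact (hf.lt_iff_lt hx' hy').1 hxy
  have hs : (s.image f).image g = s := image_image_of_leftInvOn hgf subset_rfl
  refine sum_nbij' (image (image g)) (image (image f)) (fun P hP => hs ▸ image_mem_ncOn hg hP)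
    (fun P hP => image_mem_ncOn hf hP) (fun P hP => ?_) (fun P hP => ?_) (fun P hP => ?_)
  · have hPt : ∀ B ∈ P, B ⊆ s.image f := fun B hB => (mem_ncOn.1 hP).1.subset hB
    rw [image_image]
    exact (image_congr fun B hB => image_image_of_leftInvOn hfg (hPt B hB)).trans image_id'
  · have hPs : ∀ B ∈ P, B ⊆ s := fun B hB => (mem_ncOn.1 hP).1.subset hB
    rw [image_image]
    exact (image_congr fun B hB => image_image_of_leftInvOn hgf (hPs B hB)).trans image_id'
  · rw [blockCount_image_image hg.injOn fun B hB => (mem_ncOn.1 hP).1.subset hB]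

lemma ncPoly_Icc (a b : ℕ) (ha : 1 ≤ a) : ncPoly (Icc a b) = ncPoly (Icc 1 (b + 1 - a)) := by
  rcases le_or_gt a (b + 1) with hab | hab
  · have hmono : StrictMonoOn (· + (a - 1)) (Icc 1 (b + 1 - a) : Set ℕ) :=
      fun x _ y _ hxy => by simpa using hxy
    rw [← ncPoly_image hmono, image_add_right_Icc]
    congr 2 <;> omega
  · rw [Icc_eq_empty (by omega), Icc_eq_empty (by omega)]

end relabel

/-! ### The decomposition at the successor of `1` in its block -/

noncomputable def blockOf (P : Finset (Finset ℕ)) (x : ℕ) : Finset ℕ :=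
  (P.filter (x ∈ ·)).sup id

def IsNextInBlock (P : Finset (Finset ℕ)) (x j : ℕ) : Prop :=
  ∃ B ∈ P, x ∈ B ∧ j ∈ B ∧ x < j ∧ ∀ y ∈ B, x < y → j ≤ y

noncomputable def nextInBlock (P : Finset (Finset ℕ)) (x : ℕ) : ℕ :=
  if h : ((blockOf P x).filter (x < ·)).Nonempty then ((blockOf P x).filter (x < ·)).min' h else x

namespace IsPartitionOn

variable {s : Finset ℕ} {P : Finset (Finset ℕ)}

lemma blockOf_eq (h : IsPartitionOn s P) {B : Finset ℕ} (hB : B ∈ P) {x : ℕ} (hx : x ∈ B) :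
    blockOf P x = B := by
  have : P.filter (x ∈ ·) = {B} := eq_singleton_iff_unique_mem.2
    ⟨mem_filter.2 ⟨hB, hx⟩,
      fun C hC => h.eq_of_mem (mem_filter.1 hC).1 hB (mem_filter.1 hC).2 hx⟩
  rw [blockOf, this, sup_singleton, id]

lemma isNextInBlock_nextInBlock (h : IsPartitionOn s P) {B : Finset ℕ} (hB : B ∈ P) {x y : ℕ}
    (hx : x ∈ B) (hy : y ∈ B) (hxy : x < y) : IsNextInBlock P x (nextInBlock P x) := by
  have hfilter : ∀ z, z ∈ (blockOf P x).filter (x < ·) ↔ z ∈ B ∧ x < z := by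
    simp [h.blockOf_eq hB hx]
  have hne : ((blockOf P x).filter (x < ·)).Nonempty := ⟨y, (hfilter y).2 ⟨hy, hxy⟩⟩
  rw [nextInBlock, dif_pos hne]
  exact ⟨B, hB, hx, ((hfilter _).1 (min'_mem _ hne)).1, ((hfilter _).1 (min'_mem _ hne)).2,
    fun z hz hxz => min'_le _ _ ((hfilter z).2 ⟨hz, hxz⟩)⟩

lemma nextInBlock_eq (h : IsPartitionOn s P) {x j : ℕ} (hj : IsNextInBlock P x j) :
    nextInBlock P x = j := by
  obtain ⟨B, hB, hx, hjB, hxj, hmin⟩ := hj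
  obtain ⟨B', hB', hx', hnB', hxn, hmin'⟩ := h.isNextInBlock_nextInBlock hB hx hjB hxj
  rw [h.eq_of_mem hB' hB hx' hx] at hnB' hmin'
  exact le_antisymm (hmin' j hjB hxj) (hmin _ hnB' hxn)

end IsPartitionOn

/-- Inverse of the decomposition of a partition of `[1, N]` in which `j` follows `1` in its
block: `P₁` partitions `[2, j-1]`, and `P₂` partitions `[j, N]` and receives `1` in the block
of `j`. -/
def glue (j : ℕ) (P₁ P₂ : Finset (Finset ℕ)) : Finset (Finset ℕ) :=
  P₁ ∪ P₂.image (addToBlockOf j 1)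

section decomposition

variable {N j : ℕ} {R P₁ P₂ : Finset (Finset ℕ)}

lemma image_addToBlockOf_one_mem_ncOn (h2j : 2 ≤ j) (hjN : j ≤ N)
    (h₂ : P₂ ∈ ncOn (Icc j N)) :
    P₂.image (addToBlockOf j 1) ∈ ncOn (insert 1 (Icc j N)) :=
  image_addToBlockOf_mem_ncOn h₂ (mem_Icc.2 ⟨le_rfl, hjN⟩) (fun x hx => (mem_Icc.1 hx).1)
    (by omega)

lemma disjoint_Icc_two_insert_one : Disjoint (Icc 2 (j - 1)) (insert 1 (Icc j N)) := by
  simp only [disjoint_left, mem_Icc, mem_insert]; omega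

lemma glue_mem_ncOn (h2j : 2 ≤ j) (hjN : j ≤ N) (h₁ : P₁ ∈ ncOn (Icc 2 (j - 1)))
    (h₂ : P₂ ∈ ncOn (Icc j N)) : glue j P₁ P₂ ∈ ncOn (Icc 1 N) := by
  obtain ⟨hp₁, hnc₁⟩ := mem_ncOn.1 h₁
  obtain ⟨hp₂, hnc₂⟩ := mem_ncOn.1 (image_addToBlockOf_one_mem_ncOn h2j hjN h₂)
  have hground : Icc 2 (j - 1) ∪ insert 1 (Icc j N) = Icc 1 N := by ext; simp; omega
  rw [← hground]
  refine mem_ncOn.2 ⟨hp₁.union hp₂ disjoint_Icc_two_insert_one,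
    hnc₁.union hnc₂ (fun B hB => hp₁.subset hB) (fun B hB => hp₂.subset hB) ?_⟩
  simp only [mem_Icc, mem_insert]; omega

lemma singleton_one_notMem_glue (h2j : 2 ≤ j) (h₁ : P₁ ∈ ncOn (Icc 2 (j - 1)))
    (h₂ : P₂ ∈ ncOn (Icc j N)) : {1} ∉ glue j P₁ P₂ := by
  intro h
  rcases mem_union.1 h with h | h
  · have := (mem_ncOn.1 h₁).1.subset h (mem_singleton_self 1)
    simp at this
  · obtain ⟨B, hB, hB1⟩ := mem_image.1 h
    have hsub := (mem_ncOn.1 h₂).1.subset hB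
    have h1 : 1 ∈ addToBlockOf j 1 B := hB1 ▸ mem_singleton_self 1
    rcases mem_addToBlockOf.1 h1 with h1 | ⟨-, hj⟩
    · have := hsub h1
      simp at this; omega
    · have := hB1 ▸ subset_addToBlockOf B hj
      simp at this; omega

lemma isNextInBlock_glue (h2j : 2 ≤ j) (hjN : j ≤ N) (h₂ : P₂ ∈ ncOn (Icc j N)) :
    IsNextInBlock (glue j P₁ P₂) 1 j := by
  have hp₂ := (mem_ncOn.1 h₂).1
  obtain ⟨Bj, hBj, hjBj⟩ := hp₂.exists_mem (mem_Icc.2 ⟨le_rfl, hjN⟩)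
  refine ⟨addToBlockOf j 1 Bj, mem_union_right _ (mem_image_of_mem _ hBj),
    mem_addToBlockOf.2 (Or.inr ⟨rfl, hjBj⟩), subset_addToBlockOf _ hjBj, by omega,
    fun y hy h1y => ?_⟩
  rcases mem_addToBlockOf.1 hy with hy | ⟨rfl, -⟩
  · exact (mem_Icc.1 (hp₂.subset hBj hy)).1
  · omega

lemma filter_glue (h2j : 2 ≤ j) (hjN : j ≤ N) (h₁ : P₁ ∈ ncOn (Icc 2 (j - 1)))
    (h₂ : P₂ ∈ ncOn (Icc j N)) :
    (glue j P₁ P₂).filter (· ⊆ Icc 2 (j - 1)) = P₁ := by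
  have hp₂ := (mem_ncOn.1 (image_addToBlockOf_one_mem_ncOn h2j hjN h₂)).1
  rw [glue, filter_union, filter_true_of_mem fun B hB => (mem_ncOn.1 h₁).1.subset hB,
    filter_false_of_mem fun B hB => hp₂.not_subset disjoint_Icc_two_insert_one.symm hB,
    union_empty]

lemma image_erase_filter_glue (h2j : 2 ≤ j) (h₁ : P₁ ∈ ncOn (Icc 2 (j - 1)))
    (h₂ : P₂ ∈ ncOn (Icc j N)) :
    ((glue j P₁ P₂).image (·.erase 1)).filter (· ⊆ Icc j N) = P₂ := by
  have hp₁ := (mem_ncOn.1 h₁).1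
  have hp₂ := (mem_ncOn.1 h₂).1
  have h1 : ∀ {s : Finset ℕ} {Q B}, IsPartitionOn s Q → 1 ∉ s → B ∈ Q → 1 ∉ B :=
    fun hQ h1s hB h1B => h1s (hQ.subset hB h1B)
  have hP₁ : P₁.image (·.erase 1) = P₁ :=
    (image_congr fun B hB => erase_eq_of_notMem (h1 hp₁ (by simp) hB)).trans image_id'
  have hP₂ : (P₂.image (addToBlockOf j 1)).image (·.erase 1) = P₂ := by
    rw [image_image]
    exact (image_congr fun B hB => erase_addToBlockOf (h1 hp₂ (by simp; omega) hB)).trans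
      image_id'
  rw [glue, image_union, hP₁, hP₂, filter_union,
    filter_false_of_mem fun B hB =>
      hp₁.not_subset (by simp only [disjoint_left, mem_Icc]; omega) hB,
    filter_true_of_mem fun B hB => hp₂.subset hB, empty_union]

lemma blockCount_glue (h2j : 2 ≤ j) (hjN : j ≤ N) (h₁ : P₁ ∈ ncOn (Icc 2 (j - 1)))
    (h₂ : P₂ ∈ ncOn (Icc j N)) :
    blockCount (glue j P₁ P₂) =
      blockCount P₁ + blockCount P₂ + if {j} ∈ P₂ then 1 else 0 := by
  have hp₂' := (mem_ncOn.1 (image_addToBlockOf_one_mem_ncOn h2j hjN h₂)).1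
  rw [glue, blockCount_union ((mem_ncOn.1 h₁).1.disjoint hp₂' disjoint_Icc_two_insert_one),
    blockCount_image_addToBlockOf (mem_ncOn.1 h₂).1 (by simp; omega), add_assoc]

lemma isNextInBlock_one (hR : IsPartitionOn (Icc 1 N) R) (hN : 1 ≤ N) (h1 : {1} ∉ R) :
    IsNextInBlock R 1 (nextInBlock R 1) := by
  obtain ⟨B₁, hB₁, h1B₁⟩ := hR.exists_mem (mem_Icc.2 ⟨le_rfl, hN⟩)
  obtain ⟨y, hyB₁, hy1⟩ :=
    ((nontrivial_iff_ne_singleton h1B₁).2 (ne_of_mem_of_not_mem hB₁ h1)).exists_ne 1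
  exact hR.isNextInBlock_nextInBlock hB₁ h1B₁ hyB₁
    ((mem_Icc.1 (hR.subset hB₁ hyB₁)).1.lt_of_ne' hy1)

lemma IsNextInBlock.singleton_notMem (hR : IsPartitionOn (Icc 1 N) R) (hj : IsNextInBlock R 1 j) :
    {1} ∉ R := fun h1 => by
  obtain ⟨B₁, hB₁, h1B₁, hjB₁, h1j, -⟩ := hj
  rw [← hR.eq_of_mem h1 hB₁ (mem_singleton_self 1) h1B₁, mem_singleton] at hjB₁
  omega

lemma IsNextInBlock.le (hR : IsPartitionOn (Icc 1 N) R) (hj : IsNextInBlock R 1 j) : j ≤ N := by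
  obtain ⟨B₁, hB₁, -, hjB₁, -⟩ := hj
  exact (mem_Icc.1 (hR.subset hB₁ hjB₁)).2

lemma subset_or_erase_subset (hR : R ∈ ncOn (Icc 1 N)) (hj : IsNextInBlock R 1 j) {B : Finset ℕ}
    (hB : B ∈ R) : B ⊆ Icc 2 (j - 1) ∨ B.erase 1 ⊆ Icc j N := by
  obtain ⟨hRp, hRnc⟩ := mem_ncOn.1 hR
  obtain ⟨B₁, hB₁, h1B₁, hjB₁, h1j, hmin⟩ := hj
  have hBN : ∀ x ∈ B, 1 ≤ x ∧ x ≤ N := fun x hx => mem_Icc.1 (hRp.subset hB hx)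
  by_cases hBB₁ : B = B₁
  · subst hBB₁
    refine Or.inr fun y hy => ?_
    have := hBN y (mem_of_mem_erase hy)
    have := hmin y (mem_of_mem_erase hy) (by have := ne_of_mem_erase hy; omega)
    simp only [mem_Icc]; omega
  have h1B : 1 ∉ B := fun h1B => hBB₁ (hRp.eq_of_mem hB hB₁ h1B h1B₁)
  by_cases hlt : ∀ x ∈ B, x < j
  · refine Or.inl fun x hx => ?_
    have := hBN x hx
    have := hlt x hx
    have : x ≠ 1 := fun h => h1B (h ▸ hx)
    simp only [mem_Icc]; omega
  -- a block reaching beyond `j` and below it would cross the block `{1, j, …}`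
  · obtain ⟨u, huB, hju⟩ : ∃ u ∈ B, j ≤ u := by simpa using hlt
    have hju' : j < u := hju.lt_of_ne fun h => hBB₁ (hRp.eq_of_mem hB hB₁ (h ▸ huB) hjB₁)
    refine Or.inr fun v hv => ?_
    have hvB := mem_of_mem_erase hv
    have : v ≠ 1 := ne_of_mem_erase hv
    have := hBN v hvB
    refine mem_Icc.2 ⟨le_of_not_gt fun hvj => hBB₁ ?_, this.2⟩
    exact (hRnc B₁ hB₁ B hB 1 v j u (by omega) hvj hju' h1B₁ hjB₁ hvB huB).symm

lemma filter_mem_ncOn_Icc_two (hR : R ∈ ncOn (Icc 1 N)) (hj : IsNextInBlock R 1 j) :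
    R.filter (· ⊆ Icc 2 (j - 1)) ∈ ncOn (Icc 2 (j - 1)) := by
  obtain ⟨hRp, hRnc⟩ := mem_ncOn.1 hR
  have hjN := hj.le hRp
  refine mem_ncOn.2 ⟨hRp.filter_subset (Icc_subset_Icc (by omega) (by omega))
    fun B hB x hxB hx => ?_, hRnc.mono (filter_subset _ _)⟩
  refine (subset_or_erase_subset hR hj hB).resolve_right fun h => ?_
  have := h (mem_erase.2 ⟨by simp at hx; omega, hxB⟩)
  simp at hx this; omega

lemma image_erase_filter_mem_ncOn (hR : R ∈ ncOn (Icc 1 N)) (hj : IsNextInBlock R 1 j) :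
    (R.image (·.erase 1)).filter (· ⊆ Icc j N) ∈ ncOn (Icc j N) := by
  obtain ⟨hRp, hRnc⟩ := mem_ncOn.1 hR
  have hEp := hRp.image_erase (hj.singleton_notMem hRp)
  have h1j : 1 < j := by obtain ⟨_, _, _, _, h, _⟩ := hj; exact h
  have hjN := hj.le hRp
  refine mem_ncOn.2 ⟨hEp.filter_subset (fun x hx => ?_) fun B' hB' x hxB' hx => ?_,
    (hRnc.image_of_subset fun B => erase_subset 1 B).mono (filter_subset _ _)⟩
  · simp only [mem_erase, mem_Icc] at hx ⊢; omega
  · obtain ⟨B, hB, rfl⟩ := mem_image.1 hB'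
    refine (subset_or_erase_subset hR hj hB).resolve_left fun h => ?_
    have := h (mem_of_mem_erase hxB')
    simp at hx this; omega

lemma glue_split (hR : R ∈ ncOn (Icc 1 N)) (hj : IsNextInBlock R 1 j) :
    glue j (R.filter (· ⊆ Icc 2 (j - 1))) ((R.image (·.erase 1)).filter (· ⊆ Icc j N)) =
      R := by
  have hRp := (mem_ncOn.1 hR).1
  have hadd : ∀ B ∈ R, addToBlockOf j 1 (B.erase 1) = B := by
    obtain ⟨B₁, hB₁, h1B₁, hjB₁, h1j, -⟩ := hj
    exact fun B hB => addToBlockOf_erase h1j.ne'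
      ⟨fun h => hRp.eq_of_mem hB₁ hB hjB₁ h ▸ h1B₁,
        fun h => hRp.eq_of_mem hB₁ hB h1B₁ h ▸ hjB₁⟩
  ext B
  simp only [glue, mem_union, mem_filter, mem_image]
  constructor
  · rintro (⟨hB, -⟩ | ⟨_, ⟨⟨C, hC, rfl⟩, -⟩, rfl⟩)
    exacts [hB, (hadd C hC).symm ▸ hC]
  · intro hB
    rcases subset_or_erase_subset hR hj hB with h | h
    exacts [Or.inl ⟨hB, h⟩, Or.inr ⟨_, ⟨⟨B, hB, rfl⟩, h⟩, hadd B hB⟩]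

lemma sum_ncOn_filter_singleton_one_notMem (hN : 1 ≤ N) :
    ∑ R ∈ (ncOn (Icc 1 N)).filter ({1} ∉ ·), (X : ℚ[X]) ^ blockCount R =
      ∑ j ∈ Icc 2 N, ncPoly (Icc 2 (j - 1)) *
        ∑ Q ∈ ncOn (Icc j N), X ^ blockCount Q * (if {j} ∈ Q then X else 1) := by
  simp_rw [ncPoly, sum_mul_sum, ← sum_product']
  rw [sum_sigma']
  symm
  refine sum_nbij' (fun x => glue x.1 x.2.1 x.2.2)
    (fun R => ⟨nextInBlock R 1, R.filter (· ⊆ Icc 2 (nextInBlock R 1 - 1)),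
      (R.image (·.erase 1)).filter (· ⊆ Icc (nextInBlock R 1) N)⟩) ?_ ?_ ?_ ?_ ?_
  · rintro ⟨j, P₁, P₂⟩ hx
    simp only [mem_sigma, mem_product, mem_Icc] at hx
    obtain ⟨⟨h2j, hjN⟩, h₁, h₂⟩ := hx
    exact mem_filter.2
      ⟨glue_mem_ncOn h2j hjN h₁ h₂, singleton_one_notMem_glue h2j h₁ h₂⟩
  · intro R hR
    obtain ⟨hR, h1⟩ := mem_filter.1 hR
    have hj := isNextInBlock_one (mem_ncOn.1 hR).1 hN h1
    have h1j : 1 < nextInBlock R 1 := by obtain ⟨_, _, _, _, h, _⟩ := hj; exact h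
    simp only [mem_sigma, mem_product, mem_Icc]
    exact ⟨⟨h1j, hj.le (mem_ncOn.1 hR).1⟩, filter_mem_ncOn_Icc_two hR hj,
      image_erase_filter_mem_ncOn hR hj⟩
  · rintro ⟨j, P₁, P₂⟩ hx
    simp only [mem_sigma, mem_product, mem_Icc] at hx
    obtain ⟨⟨h2j, hjN⟩, h₁, h₂⟩ := hx
    have hnext := (mem_ncOn.1 (glue_mem_ncOn h2j hjN h₁ h₂)).1.nextInBlock_eq
      (isNextInBlock_glue (P₁ := P₁) h2j hjN h₂)
    simp only [hnext, filter_glue h2j hjN h₁ h₂, image_erase_filter_glue h2j h₁ h₂]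
  · intro R hR
    obtain ⟨hR, h1⟩ := mem_filter.1 hR
    exact glue_split hR (isNextInBlock_one (mem_ncOn.1 hR).1 hN h1)
  · rintro ⟨j, P₁, P₂⟩ hx
    simp only [mem_sigma, mem_product, mem_Icc] at hx
    obtain ⟨⟨h2j, hjN⟩, h₁, h₂⟩ := hx
    rw [blockCount_glue h2j hjN h₁ h₂]
    split_ifs <;> ring

end decomposition

lemma ncPoly_Icc_one_succ (n : ℕ) :
    ncPoly (Icc 1 (n + 1)) =
      ∑ a ∈ range (n + 1), ncPoly (Icc 1 a) * ncPoly (Icc 1 (n - a)) +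
        (X - 1) * ∑ a ∈ range n, ncPoly (Icc 1 a) * ncPoly (Icc 1 (n - 1 - a)) := by
  have hsplit : ∑ j ∈ Icc 2 (n + 1), ncPoly (Icc 2 (j - 1)) *
      ∑ Q ∈ ncOn (Icc j (n + 1)), X ^ blockCount Q * (if {j} ∈ Q then X else 1) =
      ∑ a ∈ range n, ncPoly (Icc 1 a) *
        (ncPoly (Icc 1 (n - a)) + (X - 1) * ncPoly (Icc 1 (n - 1 - a))) := by
    rw [← Ico_add_one_right_eq_Icc, sum_Ico_eq_sum_range, show n + 1 + 1 - 2 = n by omega]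
    refine sum_congr rfl fun a ha => ?_
    simp only [mem_range] at ha
    rw [sum_ncOn_mul_ite_singleton_mem (by simp; omega), Icc_erase_left,
      ← Icc_add_one_left_eq_Ioc, ncPoly_Icc _ _ (by omega), ncPoly_Icc (2 + a) _ (by omega),
      ncPoly_Icc (2 + a + 1) _ (by omega),
      show 2 + a - 1 + 1 - 2 = a by omega, show n + 1 + 1 - (2 + a) = n - a by omega,
      show n + 1 + 1 - (2 + a + 1) = n - 1 - a by omega]
  rw [ncPoly_eq_erase_add (by simp : 1 ∈ Icc 1 (n + 1)),
    sum_ncOn_filter_singleton_one_notMem (by omega), hsplit, Icc_erase_left,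
    ← Icc_add_one_left_eq_Ioc, ncPoly_Icc (1 + 1) _ (by omega), show n + 1 + 1 - 2 = n by omega,
    sum_range_succ, Nat.sub_self, Icc_eq_empty (by omega : ¬ 1 ≤ 0), ncPoly_empty, mul_sum]
  have hdistrib : ∑ a ∈ range n, ncPoly (Icc 1 a) *
      (ncPoly (Icc 1 (n - a)) + (X - 1) * ncPoly (Icc 1 (n - 1 - a))) =
      ∑ a ∈ range n, ncPoly (Icc 1 a) * ncPoly (Icc 1 (n - a)) +
        ∑ a ∈ range n, (X - 1) * (ncPoly (Icc 1 a) * ncPoly (Icc 1 (n - 1 - a))) := by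
    rw [← sum_add_distrib]
    exact sum_congr rfl fun _ _ => by ring
  rw [hdistrib, mul_one]
  ring

/-! ### The toric `g`-polynomial of the cube -/

def cubeGCoeff (n m : ℕ) : ℕ := catalan (n - m) * (n - m).choose m

noncomputable def gPolyShift (n : ℕ) : ℚ[X] :=
  ∑ m ∈ range (n + 1), C (cubeGCoeff n m : ℚ) * X ^ m

lemma cubeGCoeff_eq_zero {n m : ℕ} (h : n < 2 * m) : cubeGCoeff n m = 0 := by
  rw [cubeGCoeff, Nat.choose_eq_zero_of_lt (by omega), mul_zero]

lemma cubeGCoeff_eq_zero_of_lt {n m : ℕ} (h : n < m) : cubeGCoeff n m = 0 :=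
  cubeGCoeff_eq_zero (by omega)

lemma coeff_gPolyShift (n k : ℕ) : (gPolyShift n).coeff k = cubeGCoeff n k := by
  simp only [gPolyShift, finsetSum_coeff, coeff_C_mul, coeff_X_pow, mul_ite, mul_one, mul_zero,
    sum_ite_eq, mem_range]
  split_ifs with h
  · rfl
  · rw [cubeGCoeff_eq_zero (by omega), Nat.cast_zero]

lemma gPoly_eq_aeval_gPolyShift (n : ℕ) : gPoly n = aeval (X - 1 : ℚ[X]) (gPolyShift n) := by
  simp only [gPolyShift, map_sum, map_mul, aeval_C, map_pow, aeval_X, algebraMap_eq, gPoly]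
  refine sum_subset (fun m hm => by simp only [mem_range] at hm ⊢; omega) fun m hm hm' => ?_
  simp only [mem_range] at hm hm'
  rw [show catalan (n - m) * (n - m).choose m = cubeGCoeff n m from rfl,
    cubeGCoeff_eq_zero (by omega)]
  simp

lemma sum_antidiagonal_cubeGCoeff_mul {N K i j : ℕ} (hK : i + j = K) (hKN : K ≤ N) :
    ∑ ab ∈ antidiagonal N, cubeGCoeff ab.1 i * cubeGCoeff ab.2 j =
      ∑ pq ∈ antidiagonal (N - K),
        catalan pq.1 * catalan pq.2 * (pq.1.choose i * pq.2.choose j) := by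
  have hsub : (antidiagonal (N - K)).image (fun pq => (pq.1 + i, pq.2 + j)) ⊆ antidiagonal N := by
    intro ab hab
    simp only [mem_image, HasAntidiagonal.mem_antidiagonal] at hab ⊢
    obtain ⟨pq, hpq, rfl⟩ := hab
    omega
  rw [← sum_subset hsub fun ab hab hnot => ?_, sum_image fun pq _ pq' _ h => ?_]
  · refine sum_congr rfl fun pq _ => ?_
    simp only [cubeGCoeff, Nat.add_sub_cancel]
    ring
  · simp only [Prod.mk.injEq] at h
    exact Prod.ext (by omega) (by omega)
  · rw [HasAntidiagonal.mem_antidiagonal] at hab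
    rcases lt_or_ge ab.1 i with h | h
    · rw [cubeGCoeff_eq_zero_of_lt h, zero_mul]
    rcases lt_or_ge ab.2 j with h' | h'
    · rw [cubeGCoeff_eq_zero_of_lt h', mul_zero]
    refine absurd (mem_image.2 ⟨(ab.1 - i, ab.2 - j), ?_, ?_⟩) hnot
    · rw [HasAntidiagonal.mem_antidiagonal]; omega
    · exact Prod.ext (by simp; omega) (by simp; omega)

lemma sum_antidiagonal_sum_antidiagonal_cubeGCoeff (N K : ℕ) :
    ∑ ab ∈ antidiagonal N, ∑ ij ∈ antidiagonal K,
        cubeGCoeff ab.1 ij.1 * cubeGCoeff ab.2 ij.2 =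
      catalan (N - K + 1) * (N - K).choose K := by
  rcases le_or_gt K N with hKN | hKN
  · rw [sum_comm, sum_congr rfl fun ij hij => sum_antidiagonal_cubeGCoeff_mul
      (HasAntidiagonal.mem_antidiagonal.1 hij) hKN, sum_comm, catalan_succ', sum_mul]
    refine sum_congr rfl fun pq hpq => ?_
    rw [← mul_sum, ← Nat.add_choose_eq, HasAntidiagonal.mem_antidiagonal.1 hpq]
  · rw [Nat.sub_eq_zero_of_le hKN.le, Nat.choose_eq_zero_of_lt (by omega), mul_zero]
    refine sum_eq_zero fun ab hab => sum_eq_zero fun ij hij => ?_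
    rw [HasAntidiagonal.mem_antidiagonal] at hab hij
    rcases le_or_gt ij.1 ab.1 with h | h
    · rw [cubeGCoeff_eq_zero_of_lt (n := ab.2) (by omega), mul_zero]
    · rw [cubeGCoeff_eq_zero_of_lt h, zero_mul]

lemma coeff_sum_antidiagonal_gPolyShift_mul (N k : ℕ) :
    (∑ ab ∈ antidiagonal N, gPolyShift ab.1 * gPolyShift ab.2).coeff k =
      (catalan (N - k + 1) * (N - k).choose k : ℕ) := by
  rw [finsetSum_coeff, ← sum_antidiagonal_sum_antidiagonal_cubeGCoeff, Nat.cast_sum]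
  refine sum_congr rfl fun ab _ => ?_
  simp only [coeff_mul, coeff_gPolyShift, Nat.cast_sum, Nat.cast_mul]

lemma gPolyShift_add_two (n : ℕ) :
    gPolyShift (n + 2) = ∑ ab ∈ antidiagonal (n + 1), gPolyShift ab.1 * gPolyShift ab.2 +
      X * ∑ ab ∈ antidiagonal n, gPolyShift ab.1 * gPolyShift ab.2 := by
  ext k
  rw [coeff_add, coeff_gPolyShift, coeff_sum_antidiagonal_gPolyShift_mul]
  rcases k with _ | k
  · simp [cubeGCoeff]
  rw [coeff_X_mul, coeff_sum_antidiagonal_gPolyShift_mul, ← Nat.cast_add]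
  congr 1
  rcases le_or_gt k n with hk | hk
  · rw [cubeGCoeff, show n + 2 - (k + 1) = n - k + 1 by omega,
      show n + 1 - (k + 1) = n - k by omega, Nat.choose_succ_succ]
    ring
  · rw [cubeGCoeff_eq_zero (by omega), Nat.sub_eq_zero_of_le (by omega : n + 1 ≤ k + 1),
      Nat.sub_eq_zero_of_le hk.le, Nat.choose_eq_zero_of_lt (by omega),
      Nat.choose_eq_zero_of_lt (by omega), mul_zero, add_zero]

lemma gPoly_succ (n : ℕ) :
    gPoly (n + 1) =
      ∑ a ∈ range (n + 1), gPoly a * gPoly (n - a) +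
        (X - 1) * ∑ a ∈ range n, gPoly a * gPoly (n - 1 - a) := by
  rcases n with _ | n
  · simp [gPoly]
  have := congrArg (aeval (X - 1 : ℚ[X])) (gPolyShift_add_two n)
  simp only [map_add, map_mul, map_sum, aeval_X, ← gPoly_eq_aeval_gPolyShift,
    Nat.sum_antidiagonal_eq_sum_range_succ_mk] at this
  rw [this, show n + 1 - 1 = n by omega]

lemma ncPoly_Icc_one_eq_gPoly (n : ℕ) : ncPoly (Icc 1 n) = gPoly n := by
  induction n using Nat.strong_induction_on with
  | _ n ih =>
    rcases n with _ | n
    · rw [Icc_eq_empty (by omega), ncPoly_empty]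
      simp [gPoly]
    have h : ∀ a ≤ n, ncPoly (Icc 1 a) = gPoly a := fun a ha => ih a (by omega)
    rw [ncPoly_Icc_one_succ, gPoly_succ]
    refine congrArg₂ (· + ·) (sum_congr rfl fun a ha => ?_)
      (congrArg (_ * ·) (sum_congr rfl fun a ha => ?_)) <;> rw [mem_range] at ha <;>
      rw [h a (by omega), h _ (by omega)]

theorem stmt3_general (d : ℕ) (k : ℕ) :
    (((NCd d).filter fun P => blockCount P = k).card : ℚ) = (gPoly d).coeff k ∧
    ∑ P ∈ NCd d, (X : Polynomial ℚ) ^ blockCount P = gPoly d := by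
  have hsum : ∑ P ∈ NCd d, (X : ℚ[X]) ^ blockCount P = gPoly d := by
    rw [NCd_eq_ncOn, ← ncPoly_Icc_one_eq_gPoly]
    rfl
  refine ⟨?_, hsum⟩
  rw [← hsum, finsetSum_coeff]
  simp only [coeff_X_pow, sum_boole, eq_comm]

/-- For `d ≥ 1` and `k ≥ 0`, the number of noncrossing partitions of
`[d]` with exactly `k` nonsingleton blocks is the coefficient of `x^k` in `g_d(x)`;
equivalently `Σ_{π ∈ NC(d)} x^{block(π)} = g_d(x)`. -/
theorem stmt3 (d : ℕ) (hd : 1 ≤ d) (k : ℕ) :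
    (((NCd d).filter fun P => blockCount P = k).card : ℚ) = (gPoly d).coeff k ∧
    ∑ P ∈ NCd d, (X : Polynomial ℚ) ^ blockCount P = gPoly d :=
  stmt3_general d k
end

section
/- Let d, i, j, k be integers with d > 0, i > 0, 0 ≤ j ≤ d−i, and j ≤ k ≤ d. Then Σ_{ℓ=0}^{i} binom(i,ℓ) · binom(d−i−j, d−k−ℓ) · 2^{i−ℓ} = Σ_{m=0}^{i−1} binom(i−1,m) · (2·binom(d−m−j−1, d−k) + binom(d−m−j−1, d−k−1)). -/
/-!
Both sides are the coefficient of `x ^ (d - k)` in `(x + 2) ^ i * (x + 1) ^ (d - i - j)`: the left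
side by expanding `(x + 2) ^ i` binomially, the right side by writing
`(x + 2) ^ i = (x + 2) * ((x + 1) + 1) ^ (i - 1)` and expanding the second factor. Negative lower
entries are absorbed by reading `chooseZ n (r - ℓ)` as the coefficient of `x ^ r` in
`x ^ ℓ * (x + 1) ^ n`.
-/

open Finset Polynomial
open scoped BigOperators

lemma chooseZ_natCast_sub_eq_coeff (n r ℓ : ℕ) :
    chooseZ n ((r : ℤ) - ℓ) = (X ^ ℓ * (X + 1) ^ n : ℕ[X]).coeff r := by
  rw [coeff_X_pow_mul', coeff_X_add_one_pow]
  unfold chooseZ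
  split_ifs <;> first | omega | congr 1; omega

lemma X_add_two_pow_mul_X_add_one_pow {R : Type*} [CommSemiring R] (a n : ℕ) :
    ((X + 2) ^ a * (X + 1) ^ n : R[X]) =
      ∑ m ∈ range (a + 1), (a.choose m : R[X]) * (X + 1) ^ (n + (a - m)) := by
  rw [show (X + 2 : R[X]) = 1 + (X + 1) by ring, add_pow, sum_mul]
  refine sum_congr rfl fun m _ => ?_
  rw [one_pow, pow_add]
  ring

lemma coeff_X_add_two_pow_mul_X_add_one_pow (i n r : ℕ) :
    ((X + 2) ^ i * (X + 1) ^ n : ℕ[X]).coeff r =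
      ∑ ℓ ∈ range (i + 1), i.choose ℓ * chooseZ n ((r : ℤ) - ℓ) * 2 ^ (i - ℓ) := by
  rw [add_pow, sum_mul, finsetSum_coeff]
  refine sum_congr rfl fun ℓ _ => ?_
  have hterm : (X ^ ℓ * 2 ^ (i - ℓ) * (i.choose ℓ : ℕ[X]) * (X + 1) ^ n)
      = (i.choose ℓ * 2 ^ (i - ℓ)) • (X ^ ℓ * (X + 1) ^ n) := by
    rw [nsmul_eq_mul]; push_cast; ring
  rw [hterm, coeff_smul, chooseZ_natCast_sub_eq_coeff, smul_eq_mul]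
  ring

lemma coeff_X_add_two_mul_X_add_one_pow (n r : ℕ) :
    ((X + 2) * (X + 1) ^ n : ℕ[X]).coeff r = 2 * chooseZ n r + chooseZ n ((r : ℤ) - 1) := by
  have h0 := chooseZ_natCast_sub_eq_coeff n r 0
  have h1 := chooseZ_natCast_sub_eq_coeff n r 1
  rw [Nat.cast_zero, sub_zero, pow_zero, one_mul] at h0
  rw [Nat.cast_one, pow_one] at h1
  rw [h0, h1, add_mul, coeff_add, coeff_ofNat_mul, add_comm]

theorem stmt5_general (d i j k : ℕ) (hi : 0 < i) (hid : i ≤ d)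
    (hj : j ≤ d - i) (hk2 : k ≤ d) :
    ∑ ℓ ∈ Finset.range (i + 1),
        i.choose ℓ * chooseZ (d - i - j) ((d : ℤ) - k - ℓ) * 2 ^ (i - ℓ) =
      ∑ m ∈ Finset.range i,
        (i - 1).choose m *
          (2 * chooseZ (d - m - j - 1) ((d : ℤ) - k) +
            chooseZ (d - m - j - 1) ((d : ℤ) - k - 1)) := by
  obtain ⟨a, rfl⟩ : ∃ a, i = a + 1 := ⟨i - 1, by omega⟩
  obtain ⟨r, hr⟩ : ∃ r : ℕ, (d : ℤ) - k = r := ⟨d - k, by omega⟩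
  rw [hr, ← coeff_X_add_two_pow_mul_X_add_one_pow, pow_succ', mul_assoc,
    X_add_two_pow_mul_X_add_one_pow, mul_sum, finsetSum_coeff, Nat.add_sub_cancel]
  refine sum_congr rfl fun m hm => ?_
  rw [mul_left_comm, coeff_natCast_mul, Nat.cast_id, coeff_X_add_two_mul_X_add_one_pow,
    show d - (a + 1) - j + (a - m) = d - m - j - 1 by simp only [mem_range] at hm; omega]

/-- For integers `d > 0`, `i > 0`, `0 ≤ j ≤ d-i`, `j ≤ k ≤ d`:
`Σ_{ℓ=0}^{i} binom(i,ℓ)·binom(d-i-j, d-k-ℓ)·2^{i-ℓ}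
  = Σ_{m=0}^{i-1} binom(i-1,m)·(2·binom(d-m-j-1, d-k) + binom(d-m-j-1, d-k-1))`,
with the convention `binom(n,r) = 0` for `r < 0` or `r > n`. -/
theorem stmt5 (d i j k : ℕ) (hd : 0 < d) (hi : 0 < i) (hid : i ≤ d)
    (hj : j ≤ d - i) (hk1 : j ≤ k) (hk2 : k ≤ d) :
    ∑ ℓ ∈ Finset.range (i + 1),
        i.choose ℓ * chooseZ (d - i - j) ((d : ℤ) - k - ℓ) * 2 ^ (i - ℓ) =
      ∑ m ∈ Finset.range i,
        (i - 1).choose m *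
          (2 * chooseZ (d - m - j - 1) ((d : ℤ) - k) +
            chooseZ (d - m - j - 1) ((d : ℤ) - k - 1)) :=
  stmt5_general d i j k hi hid hj hk2
end

section
/- Let d ≥ 1, i > 0, and 0 ≤ j ≤ d−i. Then for every k with 0 ≤ k ≤ d+1, the coefficient of x^k in C_{d,i,j}(x) equals the coefficient of x^{d+1−k} in C_{d,i,d−i−j}(x). -/
open Finset Polynomial
open scoped BigOperators

/-!
Write `y = x - 1`, `A = 1 + y u`, `B = 1 + 2 y u` and let `Cat` be the Catalan series. Then
`G(u) = Σ g_j u^j = Cat(u A)` and `Q_{d,m} = [u^d] (B^(d-m) + B^(d-m+1)) G` for `1 ≤ m ≤ d`, so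
after `m ↦ d + 1 - m` and `binom(i-1, r) = binom(i-1, i-1-r)` the theorem is the palindromy
`x^(d+1) Q_{d,m}(1/x) = Q_{d,d+1-m}(x)`.

The substitution `x ↦ 1/x`, `u ↦ x u` is a ring homomorphism into power series over Laurent
polynomials which acts on `[u^d]` as reflection, and it sends `A`, `B`, `G` to `Â = 1 - y u`,
`B̂ = 1 - 2 y u`, `Ĝ = Cat(x u Â)`. Expanding `Ĝ`, the reflected side becomes a sum of
`[u^e] Â^j B̂^s`, which equals `[u^e] A^j B^(e-s-j-1)` (with negative powers of `B` allowed).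
The other side is expanded through `H = Cat(x u A / B²)`, using `x A H = B (A G + y)`: both sides
of this identity solve `P = x A + (u / B²) P²`, whose solution is unique.
-/

namespace PowerSeries

variable {R : Type*} [CommRing R]

noncomputable def lin (c : R) : R⟦X⟧ := 1 + C c * X

lemma coeff_lin_pow (c : R) (j e : ℕ) : coeff e (lin c ^ j) = (j.choose e : R) * c ^ e := by
  have : lin c = rescale c (1 + X) := by simp [lin, rescale_X]
  rw [this, ← map_pow, coeff_rescale, ← Polynomial.coe_X, ← Polynomial.coe_one,
    ← Polynomial.coe_add, ← Polynomial.coe_pow, Polynomial.coeff_coe,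
    Polynomial.coeff_one_add_X_pow, mul_comm]

lemma coeff_succ_lin_mul (c : R) (F : R⟦X⟧) (k : ℕ) :
    coeff (k + 1) (lin c * F) = coeff (k + 1) F + c * coeff k F := by
  rw [lin, add_mul, one_mul, map_add, mul_assoc, coeff_C_mul, coeff_succ_X_mul]

@[simp] lemma constantCoeff_lin (c : R) : constantCoeff (lin c) = 1 := by simp [lin]

lemma isUnit_lin (c : R) : IsUnit (lin c) :=
  isUnit_iff_constantCoeff.mpr (by rw [constantCoeff_lin]; exact isUnit_one)

noncomputable def linZpow (c : R) (N : ℤ) : R⟦X⟧ := ((isUnit_lin c).unit ^ N : R⟦X⟧ˣ)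

@[simp] lemma linZpow_natCast (c : R) (k : ℕ) : linZpow c k = lin c ^ k := by
  simp [linZpow]

lemma linZpow_add (c : R) (M N : ℤ) : linZpow c (M + N) = linZpow c M * linZpow c N := by
  simp [linZpow, zpow_add]

lemma linZpow_add_one (c : R) (N : ℤ) : linZpow c (N + 1) = lin c * linZpow c N := by
  rw [linZpow_add, mul_comm, ← Nat.cast_one, linZpow_natCast, pow_one]

@[simp] lemma constantCoeff_linZpow (c : R) (N : ℤ) : constantCoeff (linZpow c N) = 1 := by
  have h : Units.map constantCoeff.toMonoidHom (isUnit_lin c).unit = 1 := by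
    ext; simp
  have := congrArg Units.val (congrArg (· ^ N) h)
  simpa [linZpow, ← map_zpow] using this

lemma coeff_succ_mul_linZpow_add_one (c : R) (F : R⟦X⟧) (N : ℤ) (k : ℕ) :
    coeff (k + 1) (F * linZpow c (N + 1))
      = coeff (k + 1) (F * linZpow c N) + c * coeff k (F * linZpow c N) := by
  rw [linZpow_add_one, mul_left_comm, coeff_succ_lin_mul]

lemma linZpow_pow (c : R) (N : ℤ) (n : ℕ) : linZpow c N ^ n = linZpow c (N * n) := by
  simp [linZpow, zpow_mul]

lemma coeff_lin_neg_pow (c : R) (j e : ℕ) :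
    coeff e (lin (-c) ^ j) = coeff e (lin c ^ j * linZpow (2 * c) ((e : ℤ) - j - 1)) := by
  induction j generalizing e with
  | zero =>
    rcases e with _ | k
    · simp
    · have h := coeff_lin_pow (2 * c) k (k + 1)
      rw [Nat.choose_succ_self, Nat.cast_zero, zero_mul] at h
      simp [coeff_one, h]
  | succ j ih =>
    rcases e with _ | k
    · simp
    · have hN : ((k + 1 : ℕ) : ℤ) - (j + 1 : ℕ) - 1 = (k : ℤ) - j - 1 := by push_cast; ring
      have hN' : ((k + 1 : ℕ) : ℤ) - j - 1 = ((k : ℤ) - j - 1) + 1 := by push_cast; ring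
      rw [pow_succ', coeff_succ_lin_mul, ih, ih, hN, pow_succ', mul_assoc, coeff_succ_lin_mul,
        hN', coeff_succ_mul_linZpow_add_one]
      ring

theorem coeff_lin_neg_pow_mul_lin_neg_pow (c : R) (j s e : ℕ) :
    coeff e (lin (-c) ^ j * lin (-(2 * c)) ^ s)
      = coeff e (lin c ^ j * linZpow (2 * c) ((e : ℤ) - s - j - 1)) := by
  induction s generalizing e with
  | zero => simpa using coeff_lin_neg_pow c j e
  | succ s ih =>
    rcases e with _ | k
    · simp
    · have hN : ((k + 1 : ℕ) : ℤ) - (s + 1 : ℕ) - j - 1 = (k : ℤ) - s - j - 1 := by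
        push_cast; ring
      have hN' : ((k + 1 : ℕ) : ℤ) - s - j - 1 = ((k : ℤ) - s - j - 1) + 1 := by
        push_cast; ring
      rw [pow_succ', mul_left_comm, coeff_succ_lin_mul, ih, ih, hN, hN',
        coeff_succ_mul_linZpow_add_one]
      ring

lemma lin_two_mul_pow_add_pow_succ (c : R) (k : ℕ) :
    lin (2 * c) ^ k + lin (2 * c) ^ (k + 1) = 2 * lin c * lin (2 * c) ^ k := by
  simp only [lin, map_mul, map_ofNat]; ring

lemma eq_of_eq_add_mul_sq {W F F' c : R⟦X⟧} (hW : constantCoeff W = 0)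
    (hF : F = c + W * F ^ 2) (hF' : F' = c + W * F' ^ 2) : F = F' := by
  have hunit : IsUnit (1 - W * (F + F')) :=
    isUnit_iff_constantCoeff.mpr (by simp [hW])
  have h : (1 - W * (F + F')) * (F - F') = 0 := by linear_combination hF - hF'
  exact sub_eq_zero.mp (hunit.mul_right_eq_zero.mp h)

lemma coeff_mul_pow_eq_zero {W : R⟦X⟧} (hW : constantCoeff W = 0) (M : R⟦X⟧) {n d : ℕ}
    (h : d < n) : coeff d (M * W ^ n) = 0 := by
  have : X ^ n ∣ M * W ^ n :=
    Dvd.dvd.mul_left (pow_dvd_pow_of_dvd (X_dvd_iff.mpr hW) n) M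
  exact X_pow_dvd_iff.mp this d h

lemma coeff_mul_subst {A : Type*} [CommRing A] [Algebra A R] {W : R⟦X⟧}
    (hW : constantCoeff W = 0) (M : R⟦X⟧) (f : A⟦X⟧) (d : ℕ) :
    coeff d (M * f.subst W)
      = ∑ n ∈ Finset.range (d + 1), coeff n f • coeff d (M * W ^ n) := by
  have hs : HasSubst W := HasSubst.of_constantCoeff_zero' hW
  conv_lhs => rw [eq_X_pow_mul_shift_add_trunc (d + 1) f]
  rw [subst_add hs, subst_mul hs, subst_pow hs, subst_X hs, subst_coe hs,
    Polynomial.aeval_eq_sum_range' (natDegree_trunc_lt f d), mul_add, ← mul_assoc,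
    mul_right_comm, map_add, coeff_mul_pow_eq_zero hW _ (Nat.lt_succ_self d), zero_add,
    Finset.mul_sum, map_sum]
  refine Finset.sum_congr rfl fun n hn => ?_
  rw [coeff_trunc, if_pos (Finset.mem_range.mp hn), mul_smul_comm, coeff_smul]

noncomputable def catalanComp (W : R⟦X⟧) : R⟦X⟧ :=
  (catalanSeries.map (Nat.castRingHom R)).subst W

lemma catalanComp_eq {W : R⟦X⟧} (hW : constantCoeff W = 0) :
    catalanComp W = 1 + W * catalanComp W ^ 2 := by
  have hs : HasSubst W := HasSubst.of_constantCoeff_zero' hW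
  have h := congrArg (fun f => substAlgHom hs (f.map (Nat.castRingHom R)))
    catalanSeries_sq_mul_X_add_one
  simp only [map_add, map_mul, map_pow, map_one, map_X, substAlgHom_X, coe_substAlgHom] at h
  rw [catalanComp]
  linear_combination -h

lemma coeff_mul_catalanComp_X_mul (M V : R⟦X⟧) (d : ℕ) :
    coeff d (M * catalanComp (X * V))
      = ∑ n ∈ Finset.range (d + 1), (catalan n : R) * coeff (d - n) (M * V ^ n) := by
  rw [catalanComp, coeff_mul_subst (by simp) M]
  refine Finset.sum_congr rfl fun n hn => ?_
  have hnd : n ≤ d := Nat.lt_succ_iff.mp (Finset.mem_range.mp hn)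
  rw [coeff_map, catalanSeries_coeff, smul_eq_mul, mul_pow, mul_left_comm,
    coeff_X_pow_mul', if_pos hnd, eq_natCast]

lemma map_catalanComp {S : Type*} [CommRing S] (φ : R⟦X⟧ →+* S⟦X⟧) {W : R⟦X⟧}
    (hW : constantCoeff W = 0) (hφW : constantCoeff (φ W) = 0) :
    φ (catalanComp W) = catalanComp (φ W) := by
  refine eq_of_eq_add_mul_sq hφW ?_ (catalanComp_eq hφW)
  rw [← map_one φ, ← map_pow, ← map_mul, ← map_add, ← catalanComp_eq hW]

lemma rescale_C (a r : R) : rescale a (C r) = C r := by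
  ext n; rcases n with _ | n <;> simp [coeff_rescale, coeff_C]

lemma map_lin {S : Type*} [CommRing S] (f : R →+* S) (c : R) : map f (lin c) = lin (f c) := by
  simp [lin]

lemma C_one_add_mul_lin_mul_catalanComp (c : R) :
    C (1 + c) * lin c * catalanComp (X * (C (1 + c) * lin c * linZpow (2 * c) (-2)))
      = lin (2 * c) * (lin c * catalanComp (X * lin c) + C c) := by
  set invSq := linZpow (2 * c) (-2)
  have hB : invSq * lin (2 * c) ^ 2 = 1 := by
    rw [← linZpow_natCast, ← linZpow_add]; simp [linZpow]
  refine eq_of_eq_add_mul_sq (W := X * invSq) (c := C (1 + c) * lin c) (by simp) ?_ ?_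
  · have hH := catalanComp_eq (W := X * (C (1 + c) * lin c * invSq)) (by simp)
    linear_combination (C (1 + c) * lin c) * hH
  · have hG := catalanComp_eq (W := X * lin c) (by simp)
    simp only [lin, map_add, map_mul, map_one, map_ofNat] at hG hB ⊢
    linear_combination (1 + C c * X) * hG
      - X * ((1 + C c * X) * catalanComp (X * (1 + C c * X)) + C c) ^ 2 * hB

lemma coeff_lin_neg_catalanComp_eq_sum (c : R) (d s : ℕ) :
    (1 + c) * coeff d ((lin (-(2 * c)) ^ s + lin (-(2 * c)) ^ (s + 1))
        * catalanComp (X * (C (1 + c) * lin (-c))))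
      = ∑ n ∈ Finset.range (d + 1), (catalan n : R) *
          (2 * (1 + c) ^ (n + 1) * coeff (d - n) (lin (-c) ^ (n + 1) * lin (-(2 * c)) ^ s)) := by
  have hsum := lin_two_mul_pow_add_pow_succ (-c) s
  rw [mul_neg] at hsum
  rw [hsum, coeff_mul_catalanComp_X_mul, Finset.mul_sum]
  refine Finset.sum_congr rfl fun n _ => ?_
  have h : 2 * lin (-c) * lin (-(2 * c)) ^ s * (C (1 + c) * lin (-c)) ^ n
      = C (2 * (1 + c) ^ n) * (lin (-c) ^ (n + 1) * lin (-(2 * c)) ^ s) := by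
    simp only [mul_pow, map_mul, map_ofNat, map_pow]; ring
  rw [h, coeff_C_mul]; ring

lemma coeff_lin_catalanComp_eq_sum (c : R) {d m : ℕ} (h1 : 1 ≤ m) (h2 : m ≤ d) :
    coeff d ((lin (2 * c) ^ (m - 1) + lin (2 * c) ^ m) * catalanComp (X * lin c))
      = ∑ n ∈ Finset.range (d + 1), (catalan n : R) *
          (2 * (1 + c) ^ (n + 1) *
            coeff (d - n) (lin c ^ (n + 1) * linZpow (2 * c) ((m : ℤ) - 2 - 2 * n))) := by
  have hpow : lin (2 * c) ^ (m - 1) = lin (2 * c) * linZpow (2 * c) ((m : ℤ) - 2) := by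
    rw [← linZpow_add_one, ← linZpow_natCast]; congr 1; omega
  have hsplit : (lin (2 * c) ^ (m - 1) + lin (2 * c) ^ m) * catalanComp (X * lin c)
      = 2 * linZpow (2 * c) ((m : ℤ) - 2) * (C (1 + c) * lin c)
          * catalanComp (X * (C (1 + c) * lin c * linZpow (2 * c) (-2)))
        - C (2 * c) * lin (2 * c) ^ (m - 1) := by
    have hm : lin (2 * c) ^ m = lin (2 * c) ^ (m - 1 + 1) := by rw [Nat.sub_add_cancel h1]
    rw [hm, lin_two_mul_pow_add_pow_succ, mul_assoc _ (C (1 + c) * lin c),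
      C_one_add_mul_lin_mul_catalanComp, hpow, map_mul, map_ofNat]
    ring
  have hvanish : coeff d (C (2 * c) * lin (2 * c) ^ (m - 1)) = 0 := by
    rw [coeff_C_mul, coeff_lin_pow, Nat.choose_eq_zero_of_lt (by omega), Nat.cast_zero,
      zero_mul, mul_zero]
  rw [hsplit, map_sub, hvanish, sub_zero, coeff_mul_catalanComp_X_mul]
  refine Finset.sum_congr rfl fun n _ => ?_
  have h : 2 * linZpow (2 * c) ((m : ℤ) - 2) * (C (1 + c) * lin c)
        * (C (1 + c) * lin c * linZpow (2 * c) (-2)) ^ n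
      = C (2 * (1 + c) ^ (n + 1))
          * (lin c ^ (n + 1) * linZpow (2 * c) ((m : ℤ) - 2 - 2 * n)) := by
    rw [mul_pow, linZpow_pow, show (m : ℤ) - 2 - 2 * n = (m - 2) + (-2) * n by ring, linZpow_add]
    simp only [mul_pow, map_mul, map_ofNat, map_pow]; ring
  rw [h, coeff_C_mul]

theorem coeff_lin_neg_catalanComp_eq_coeff_lin_catalanComp (c : R) {d m : ℕ} (h1 : 1 ≤ m)
    (h2 : m ≤ d) :
    (1 + c) * coeff d ((lin (-(2 * c)) ^ (d - m) + lin (-(2 * c)) ^ (d - m + 1))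
        * catalanComp (X * (C (1 + c) * lin (-c))))
      = coeff d ((lin (2 * c) ^ (m - 1) + lin (2 * c) ^ m) * catalanComp (X * lin c)) := by
  rw [coeff_lin_neg_catalanComp_eq_sum, coeff_lin_catalanComp_eq_sum c h1 h2]
  refine Finset.sum_congr rfl fun n hn => ?_
  have hnd : n ≤ d := Nat.lt_succ_iff.mp (Finset.mem_range.mp hn)
  rw [coeff_lin_neg_pow_mul_lin_neg_pow,
    show ((d - n : ℕ) : ℤ) - (d - m : ℕ) - (n + 1 : ℕ) - 1 = m - 2 - 2 * n by omega]

end PowerSeries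

open scoped PowerSeries LaurentPolynomial
open LaurentPolynomial
open PowerSeries (lin catalanComp)

lemma toLaurent_reflect {R : Type*} [CommSemiring R] {p : R[X]} {N : ℕ} (h : p.natDegree ≤ N) :
    toLaurent (p.reflect N) = invert (toLaurent p) * T N := by
  obtain ⟨k, rfl⟩ := Nat.exists_eq_add_of_le h
  have hmul := reflect_mul p 1 le_rfl (natDegree_one.trans_le (Nat.zero_le k))
  rw [mul_one] at hmul
  rw [hmul, reflect_one, map_mul, ← reverse, toLaurent_reverse, toLaurent_X_pow, mul_assoc,
    ← T_add, Nat.cast_add]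

/-- The substitution `x ↦ x⁻¹` in the coefficients followed by `u ↦ x u`. On the
`u^d`-coefficient it is `reflect d` (see `toLaurent_reflect`), but unlike `reflect` it is a ring
homomorphism. -/
noncomputable def laurentDual {R : Type*} [CommRing R] : R[X]⟦X⟧ →+* R[T;T⁻¹]⟦X⟧ :=
  (PowerSeries.rescale (T 1)).comp
    (PowerSeries.map ((invert (R := R) : R[T;T⁻¹] →+* R[T;T⁻¹]).comp toLaurent))

section laurentDual
variable {R : Type*} [CommRing R]

lemma coeff_laurentDual (F : R[X]⟦X⟧) (d : ℕ) :
    PowerSeries.coeff d (laurentDual F) = T d * invert (toLaurent (PowerSeries.coeff d F)) := by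
  simp [laurentDual, PowerSeries.coeff_rescale, T_pow]

lemma laurentDual_lin (c : R[X]) :
    laurentDual (lin c) = lin (invert (toLaurent c) * T 1) := by
  simp [laurentDual, lin, PowerSeries.rescale_X, PowerSeries.rescale_C, mul_assoc]

lemma laurentDual_X :
    laurentDual (PowerSeries.X : R[X]⟦X⟧) = PowerSeries.C (T 1) * PowerSeries.X := by
  simp [laurentDual, PowerSeries.rescale_X]

lemma invert_toLaurent_X_sub_one_mul_T_one :
    invert (toLaurent (X - 1 : R[X])) * T 1 = toLaurent (-(X - 1)) := by
  rw [map_sub, map_one, toLaurent_X, map_sub, map_one, invert_T, sub_mul, ← T_add]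
  simp

lemma laurentDual_catalanComp_X_mul_lin_X_sub_one :
    laurentDual (catalanComp (PowerSeries.X * lin (X - 1 : R[X])))
      = PowerSeries.map toLaurent
          (catalanComp (PowerSeries.X * (PowerSeries.C (1 + (X - 1)) * lin (-(X - 1))))) := by
  rw [PowerSeries.map_catalanComp _ (by simp) (by simp [laurentDual]),
    PowerSeries.map_catalanComp _ (by simp) (by simp)]
  congr 1
  simp only [map_mul, laurentDual_X, laurentDual_lin, invert_toLaurent_X_sub_one_mul_T_one,
    PowerSeries.map_X, PowerSeries.map_C, PowerSeries.map_lin, add_sub_cancel, toLaurent_X]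
  ring

lemma laurentDual_lin_two_mul_X_sub_one :
    laurentDual (lin (2 * (X - 1) : R[X])) = PowerSeries.map toLaurent (lin (-(2 * (X - 1)))) := by
  rw [laurentDual_lin, PowerSeries.map_lin, map_mul, map_mul, mul_assoc,
    invert_toLaurent_X_sub_one_mul_T_one, map_neg, map_neg, map_mul, map_ofNat, map_ofNat, mul_neg]

end laurentDual

lemma coeff_catalanComp_X_mul_lin_X_sub_one (j : ℕ) :
    PowerSeries.coeff j (catalanComp (PowerSeries.X * lin (X - 1 : ℚ[X]))) = gPoly j := by
  rw [← one_mul (catalanComp _), PowerSeries.coeff_mul_catalanComp_X_mul, gPoly,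
    ← Finset.sum_range_reflect]
  symm
  refine Finset.sum_subset (Finset.range_subset_range.mpr (by omega)) (fun m hm hm' => ?_)
    |>.trans (Finset.sum_congr rfl fun m hm => ?_)
  · simp only [Finset.mem_range] at hm hm'
    rw [Nat.choose_eq_zero_of_lt (by omega), mul_zero, Nat.cast_zero, map_zero, zero_mul]
  · rw [one_mul, PowerSeries.coeff_lin_pow, Nat.add_sub_cancel,
      Nat.sub_sub_self (by simp at hm; omega)]
    simp [mul_assoc]

lemma Qpoly_eq_coeff {d m : ℕ} (h1 : 1 ≤ m) (h2 : m ≤ d) :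
    Qpoly d m = PowerSeries.coeff d ((lin (2 * (X - 1) : ℚ[X]) ^ (d - m)
      + lin (2 * (X - 1) : ℚ[X]) ^ (d - m + 1)) * catalanComp (PowerSeries.X * lin (X - 1))) := by
  rw [Qpoly, if_neg (by omega), if_pos h2, PowerSeries.coeff_mul,
    Finset.Nat.sum_antidiagonal_eq_sum_range_succ_mk, ← Finset.sum_range_reflect]
  refine (Finset.sum_subset (fun j hj => ?_) (fun j hj hj' => ?_)).trans
    (Finset.sum_congr rfl fun j hj => ?_)
  · simp only [Finset.mem_Icc, Finset.mem_range] at hj ⊢; omega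
  · simp only [Finset.mem_Icc, Finset.mem_range] at hj hj'
    rw [Nat.choose_eq_zero_of_lt (by omega), Nat.choose_eq_zero_of_lt (by omega)]
    simp
  · simp only [Finset.mem_range] at hj
    rw [Nat.succ_sub_one, Nat.sub_sub_self (by omega), map_add, PowerSeries.coeff_lin_pow,
      PowerSeries.coeff_lin_pow, coeff_catalanComp_X_mul_lin_X_sub_one,
      show d + 1 - m = d - m + 1 by omega, C_eq_natCast, mul_pow]
    push_cast
    ring

lemma natDegree_X_sub_one_pow_le {R : Type*} [CommRing R] (n : ℕ) :
    ((X - 1 : R[X]) ^ n).natDegree ≤ n := by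
  simpa using natDegree_pow_le_of_le n (natDegree_X_sub_C_le (1 : R))

lemma natDegree_gPoly_le (j : ℕ) : (gPoly j).natDegree ≤ j :=
  natDegree_sum_le_of_forall_le _ _ fun m hm =>
    (natDegree_C_mul_le _ _).trans <| (natDegree_X_sub_one_pow_le m).trans <| by
      simp only [Finset.mem_range] at hm; omega

lemma natDegree_Qpoly_le {d m : ℕ} (h1 : 1 ≤ m) (h2 : m ≤ d) :
    (Qpoly d m).natDegree ≤ d + 1 := by
  rw [Qpoly, if_neg (by omega), if_pos h2]
  refine natDegree_sum_le_of_forall_le _ _ fun j hj => ?_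
  simp only [Finset.mem_Icc] at hj
  calc _ ≤ (d - j) + j := natDegree_mul_le_of_le
          ((natDegree_C_mul_le _ _).trans (natDegree_X_sub_one_pow_le _)) (natDegree_gPoly_le j)
    _ ≤ d + 1 := by omega

theorem reflect_Qpoly_eq_coeff {d m : ℕ} (h1 : 1 ≤ m) (h2 : m ≤ d) :
    (Qpoly d m).reflect (d + 1) = (1 + (X - 1)) * PowerSeries.coeff d
      ((lin (-(2 * (X - 1)) : ℚ[X]) ^ (d - m) + lin (-(2 * (X - 1)) : ℚ[X]) ^ (d - m + 1))
        * catalanComp (PowerSeries.X * (PowerSeries.C (1 + (X - 1)) * lin (-(X - 1))))) := by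
  apply toLaurent_injective
  have hT : (T ((d + 1 : ℕ) : ℤ) : ℚ[T;T⁻¹]) = T 1 * T d := by
    rw [← T_add]; push_cast; ring_nf
  rw [toLaurent_reflect (natDegree_Qpoly_le h1 h2), Qpoly_eq_coeff h1 h2, hT, mul_left_comm,
    mul_comm (invert _), ← coeff_laurentDual, map_mul, map_add, map_pow, map_pow,
    laurentDual_lin_two_mul_X_sub_one, laurentDual_catalanComp_X_mul_lin_X_sub_one, ← map_pow,
    ← map_pow, ← map_add,
    ← map_mul, PowerSeries.coeff_map, map_mul (toLaurent (R := ℚ)), add_sub_cancel, toLaurent_X]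

theorem reflect_Qpoly {d m : ℕ} (h1 : 1 ≤ m) (h2 : m ≤ d) :
    (Qpoly d m).reflect (d + 1) = Qpoly d (d + 1 - m) := by
  rw [reflect_Qpoly_eq_coeff h1 h2,
    PowerSeries.coeff_lin_neg_catalanComp_eq_coeff_lin_catalanComp (X - 1) h1 h2,
    Qpoly_eq_coeff (by omega) (by omega), show d - (d + 1 - m) = m - 1 by omega,
    Nat.sub_add_cancel h1]

theorem coeff_Qpoly_symm {d m k : ℕ} (h1 : 1 ≤ m) (h2 : m ≤ d) (hk : k ≤ d + 1) :
    (Qpoly d m).coeff k = (Qpoly d (d + 1 - m)).coeff (d + 1 - k) := by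
  rw [← reflect_Qpoly h1 h2, coeff_reflect, revAt_le (by omega), Nat.sub_sub_self hk]

theorem stmt11_general (d i j k : ℕ) (hid : i ≤ d)
    (hj : j ≤ d - i) (hk : k ≤ d + 1) :
    (Cpoly d i j).coeff k = (Cpoly d i (d - i - j)).coeff (d + 1 - k) := by
  rw [Cpoly, Cpoly, finsetSum_coeff, finsetSum_coeff]
  refine Finset.sum_nbij' (fun m => d + 1 - m) (fun m => d + 1 - m) ?_ ?_ ?_ ?_ ?_ <;>
    intro m hm <;> simp only [Finset.mem_Icc] at hm ⊢
  any_goals omega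
  rw [coeff_C_mul, coeff_C_mul, coeff_Qpoly_symm (by omega) (by omega) hk,
    show d + 1 - m - 1 - (d - i - j) = (i - 1) - (m - 1 - j) by omega, Nat.choose_symm (by omega)]

/-- Let `d ≥ 1`, `i > 0`, `0 ≤ j ≤ d-i`.  Then for every
`0 ≤ k ≤ d+1`, the coefficient of `x^k` in `C_{d,i,j}(x)` equals the coefficient of
`x^{d+1-k}` in `C_{d,i,d-i-j}(x)`. -/
theorem stmt11 (d i j k : ℕ) (hd : 1 ≤ d) (hi : 0 < i) (hid : i ≤ d)
    (hj : j ≤ d - i) (hk : k ≤ d + 1) :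
    (Cpoly d i j).coeff k = (Cpoly d i (d - i - j)).coeff (d + 1 - k) :=
  stmt11_general d i j k hid hj hk
end

section
/- For every integer d ≥ 0 and every ℓ with 0 ≤ ℓ ≤ d+1, the coefficient of x^ℓ in Q_{d,d+1}(x) equals the coefficient of x^{d+1−ℓ} in Q_{d,0}(x); equivalently, x^{d+1}·Q_{d,d+1}(1/x) = Q_{d,0}(x). -/
open Finset Polynomial
open scoped BigOperators

namespace S12

lemma hockey (m j : ℕ) : ∑ p ∈ range (m+1), p.choose j = (m+1).choose (j+1) := by
  induction m with
  | zero => cases j <;> simp [Nat.choose_eq_zero_of_lt]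
  | succ m ih => rw [Finset.sum_range_succ, ih, Nat.choose_succ_succ (m+1) j, add_comm]

lemma vand (r s M : ℕ) : ∑ p ∈ range (M+1), r.choose p * s.choose (M-p) = (r+s).choose M := by
  rw [Nat.add_choose_eq, Finset.Nat.sum_antidiagonal_eq_sum_range_succ_mk]

lemma keyV (n : ℕ) : ∀ j k, ∑ p ∈ range (n+1), p.choose j * (n-p).choose k
    = (n+1).choose (j+k+1) := by
  induction n with
  | zero => intro j k; cases j <;> cases k <;> simp [Nat.choose]
  | succ n ih =>
    intro j k
    rw [Finset.sum_range_succ]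
    cases k with
    | zero =>
      simp only [Nat.choose_zero_right, mul_one]
      rw [← Finset.sum_range_succ]
      simpa using hockey (n+1) j
    | succ k =>
      have h1 : ∀ p ∈ range (n+1), p.choose j * (n+1-p).choose (k+1)
          = p.choose j * (n-p).choose (k+1) + p.choose j * (n-p).choose k := by
        intro p hp
        rw [Finset.mem_range] at hp
        have : n + 1 - p = (n - p) + 1 := by omega
        rw [this, Nat.choose_succ_succ, Nat.mul_add, add_comm]
      rw [Finset.sum_congr rfl h1, Finset.sum_add_distrib, ih j (k+1), ih j k,
        Nat.sub_self]
      simp only [Nat.choose_zero_succ, mul_zero, add_zero]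
      have : j + (k+1) + 1 = (j + k + 1) + 1 := by omega
      rw [this, Nat.choose_succ_succ (n+1) (j+k+1)]
      simp only [Nat.succ_eq_add_one]
      omega

def cc (i p : ℕ) : ℕ := catalan (i - p) * (i - p).choose p

lemma cc_eq_zero {i p : ℕ} (h : i < p) : cc i p = 0 := by
  have h1 : i - p = 0 := by omega
  have h2 : 1 ≤ p := by omega
  simp [cc, h1, Nat.choose_eq_zero_of_lt (by omega : (0:ℕ) < p)]

lemma cat_conv (D : ℕ) : ∑ r ∈ range (D+1), catalan r * catalan (D-r) = catalan (D+1) := by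
  rw [catalan_succ', Finset.Nat.sum_antidiagonal_eq_sum_range_succ_mk]

lemma keyA (N M : ℕ) : ∑ i ∈ range (N+1), ∑ p ∈ range (M+1), cc i p * cc (N-i) (M-p)
    = catalan (N+1-M) * (N-M).choose M := by
  rcases le_or_gt M N with hMN | hMN
  · set D := N - M with hD
    rw [Finset.sum_comm]
    have step2 : ∀ p ∈ range (M+1), ∑ i ∈ range (N+1), cc i p * cc (N-i) (M-p)
        = ∑ r ∈ range (D+1), (catalan r * r.choose p) *
            (catalan (D-r) * (D-r).choose (M-p)) := by
      intro p hp
      rw [Finset.mem_range] at hp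
      have hpM : p ≤ M := by omega
      have e1 : ∑ i ∈ range (N+1), cc i p * cc (N-i) (M-p)
          = ∑ i ∈ Finset.Ico p (N+1), cc i p * cc (N-i) (M-p) := by
        refine (Finset.sum_subset ?_ ?_).symm
        · intro i hi; rw [Finset.mem_Ico] at hi; rw [Finset.mem_range]; omega
        · intro i hi hni
          rw [Finset.mem_range] at hi
          rw [Finset.mem_Ico] at hni
          have : i < p := by omega
          rw [cc_eq_zero this, zero_mul]
      rw [e1, Finset.sum_Ico_eq_sum_range]
      have e2 : ∑ r ∈ range (N+1-p), cc (p+r) p * cc (N-(p+r)) (M-p)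
          = ∑ r ∈ range (D+1), cc (p+r) p * cc (N-(p+r)) (M-p) := by
        refine (Finset.sum_subset ?_ ?_).symm
        · intro r hr; rw [Finset.mem_range] at hr ⊢; omega
        · intro r hr hnr
          rw [Finset.mem_range] at hr hnr
          have h1 : p + 1 ≤ M := by omega
          have h2 : N - (p+r) < M - p := by omega
          rw [cc_eq_zero h2, mul_zero]
      rw [e2]
      refine Finset.sum_congr rfl ?_
      intro r hr
      rw [Finset.mem_range] at hr
      have c1 : p + r - p = r := by omega
      have c2 : N - (p+r) - (M-p) = D - r := by omega
      unfold cc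
      rw [c1, c2]
    rw [Finset.sum_congr rfl step2, Finset.sum_comm]
    have step3 : ∀ r ∈ range (D+1),
        ∑ p ∈ range (M+1), (catalan r * r.choose p) * (catalan (D-r) * (D-r).choose (M-p))
          = (catalan r * catalan (D-r)) * D.choose M := by
      intro r hr
      rw [Finset.mem_range] at hr
      have : ∀ p ∈ range (M+1), (catalan r * r.choose p) * (catalan (D-r) * (D-r).choose (M-p))
          = (catalan r * catalan (D-r)) * (r.choose p * (D-r).choose (M-p)) := by
        intro p _; ring
      rw [Finset.sum_congr rfl this, ← Finset.mul_sum, vand r (D-r) M]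
      have : r + (D - r) = D := by omega
      rw [this]
    rw [Finset.sum_congr rfl step3, ← Finset.sum_mul, cat_conv]
    have : N + 1 - M = D + 1 := by omega
    rw [this]
  · have hr : (N - M).choose M = 0 := by
      apply Nat.choose_eq_zero_of_lt; omega
    rw [hr, mul_zero]
    refine Finset.sum_eq_zero ?_
    intro i hi
    rw [Finset.mem_range] at hi
    refine Finset.sum_eq_zero ?_
    intro p hp
    rw [Finset.mem_range] at hp
    rcases le_or_gt p i with h | h
    · have : N - i < M - p := by omega
      rw [cc_eq_zero this, mul_zero]
    · rw [cc_eq_zero h, zero_mul]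

noncomputable def gX (n : ℕ) : Polynomial ℚ := ∑ m ∈ range (n+1), C ((cc n m : ℕ) : ℚ) * X^m

lemma coeff_gX (n p : ℕ) : (gX n).coeff p = (cc n p : ℚ) := by
  unfold gX
  rw [Polynomial.finset_sum_coeff]
  rcases lt_or_ge p (n+1) with h | h
  · rw [Finset.sum_eq_single p]
    · simp
    · intro m _ hmp
      simp [Polynomial.coeff_C_mul, Polynomial.coeff_X_pow, Ne.symm hmp]
    · intro hnp; exact absurd (Finset.mem_range.mpr h) hnp
  · rw [Finset.sum_eq_zero, cc_eq_zero (by omega : n < p), Nat.cast_zero]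
    intro m hm
    rw [Finset.mem_range] at hm
    rw [Polynomial.coeff_C_mul, Polynomial.coeff_X_pow, if_neg (by omega : ¬ p = m), mul_zero]

lemma keyAQ (N M : ℕ) :
    ∑ i ∈ range (N+1), ∑ p ∈ range (M+1), (cc i p : ℚ) * (cc (N-i) (M-p) : ℚ)
      = ((catalan (N+1-M) * (N-M).choose M : ℕ) : ℚ) := by
  rw [← keyA N M]
  push_cast
  rfl

lemma coeff_convX (n m : ℕ) :
    (∑ i ∈ range (n+1), gX i * gX (n-i)).coeff m
      = ∑ i ∈ range (n+1), ∑ p ∈ range (m+1), (cc i p : ℚ) * (cc (n-i) (m-p) : ℚ) := by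
  rw [Polynomial.finset_sum_coeff]
  refine Finset.sum_congr rfl ?_
  intro i _
  rw [Polynomial.coeff_mul, Finset.Nat.sum_antidiagonal_eq_sum_range_succ_mk]
  refine Finset.sum_congr rfl ?_
  intro p _
  rw [coeff_gX, coeff_gX]

lemma R1X (n : ℕ) : gX (n+1) =
    (∑ i ∈ range (n+1), gX i * gX (n-i)) + X * ∑ i ∈ range n, gX i * gX (n-1-i) := by
  ext m
  rw [Polynomial.coeff_add, coeff_gX]
  cases m with
  | zero =>
    rw [Polynomial.mul_coeff_zero, Polynomial.coeff_X_zero, zero_mul, add_zero, coeff_convX]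
    rw [keyAQ n 0]
    simp [cc]
  | succ m =>
    rw [Polynomial.coeff_X_mul, coeff_convX, keyAQ]
    cases n with
    | zero =>
      have e1 : cc 1 (m+1) = 0 := by
        unfold cc
        rcases Nat.eq_zero_or_pos m with hm | hm
        · subst hm; simp [cc, catalan]
        · rw [Nat.sub_eq_zero_of_le (by omega : (1:ℕ) ≤ m+1)]
          rw [Nat.choose_eq_zero_of_lt (by omega : (0:ℕ) < m+1), mul_zero]
      have e2 : catalan (0+1-(m+1)) * (0-(m+1)).choose (m+1) = 0 := by
        rw [Nat.choose_eq_zero_of_lt (by omega : (0:ℕ)-(m+1) < m+1), mul_zero]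
      rw [e1, e2]
      simp
    | succ n =>
      simp only [Nat.add_sub_cancel]
      rw [coeff_convX, keyAQ, ← Nat.cast_add]
      congr 1
      unfold cc
      rcases le_or_gt m n with h | h
      · have e1 : n+1+1-(m+1) = (n-m)+1 := by omega
        have e2 : n+1-(m+1) = n-m := by omega
        have e3 : n+1-m = (n-m)+1 := by omega
        rw [e1, e2, e3, Nat.choose_succ_succ]
        ring
      · have e1 : n+1+1-(m+1) = n+1-m := by omega
        rw [Nat.choose_eq_zero_of_lt (by omega : n+1+1-(m+1) < m+1), mul_zero]
        rw [Nat.choose_eq_zero_of_lt (by omega : n+1-(m+1) < m+1), mul_zero]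
        rw [Nat.choose_eq_zero_of_lt (by omega : n-m < m), mul_zero]
        simp

lemma gPoly_eq (n : ℕ) : gPoly n = aeval (X - 1 : Polynomial ℚ) (gX n) := by
  have h1 : aeval (X - 1 : Polynomial ℚ) (gX n)
      = ∑ m ∈ range (n+1), C ((cc n m : ℕ) : ℚ) * (X-1)^m := by
    unfold gX
    rw [map_sum]
    refine Finset.sum_congr rfl fun m _ => ?_
    rw [map_mul, map_pow, aeval_C, aeval_X]
    rfl
  rw [h1]
  unfold gPoly
  simp only [cc]
  refine Finset.sum_subset (Finset.range_subset_range.mpr (by omega)) ?_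
  intro m hm hnm
  rw [Finset.mem_range] at hm hnm
  rw [Nat.choose_eq_zero_of_lt (by omega : n - m < m), mul_zero]
  simp

lemma gPoly_zero : gPoly 0 = 1 := by
  unfold gPoly
  simp [catalan]

lemma R1 (n : ℕ) : gPoly (n+1) =
    (∑ i ∈ range (n+1), gPoly i * gPoly (n-i))
      + (X - 1) * ∑ i ∈ range n, gPoly i * gPoly (n-1-i) := by
  simp only [gPoly_eq]
  rw [R1X, map_add, map_mul, map_sum, map_sum, aeval_X]
  simp only [map_mul]

lemma gPoly_natDegree_le (n : ℕ) : (gPoly n).natDegree ≤ n := by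
  unfold gPoly
  refine Polynomial.natDegree_sum_le_of_forall_le _ _ ?_
  intro m hm
  rw [Finset.mem_range] at hm
  refine le_trans (Polynomial.natDegree_mul_le) ?_
  rw [Polynomial.natDegree_C, zero_add]
  refine le_trans (Polynomial.natDegree_pow_le) ?_
  have : (X - 1 : Polynomial ℚ).natDegree = 1 := by
    rw [← Polynomial.C_1, Polynomial.natDegree_X_sub_C]
  rw [this, mul_one]
  omega

section Generic
variable {R : Type*} [CommRing R]

lemma sq_diag (F : ℕ → ℕ → R) (N : ℕ) (hF : ∀ j k, N < j + k → F j k = 0) :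
    ∑ j ∈ range (N+1), ∑ k ∈ range (N+1), F j k
      = ∑ i ∈ range (N+1), ∑ u ∈ range (i+1), F u (i-u) := by
  have L : ∀ j ∈ range (N+1), ∑ k ∈ range (N+1), F j k = ∑ k ∈ range (N+1-j), F j k := by
    intro j hj; rw [Finset.mem_range] at hj
    refine (Finset.sum_subset (Finset.range_subset_range.mpr (by omega)) ?_).symm
    intro k hk hnk; rw [Finset.mem_range] at hk hnk
    exact hF j k (by omega)
  rw [Finset.sum_congr rfl L]
  have Rw : ∑ i ∈ range (N+1), ∑ u ∈ range (i+1), F u (i-u)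
      = ∑ u ∈ range (N+1), ∑ i ∈ Finset.Ico u (N+1), F u (i-u) := by
    simp only [Finset.range_eq_Ico]
    exact (Finset.sum_Ico_Ico_comm 0 (N+1) (fun u i => F u (i-u))).symm
  rw [Rw]
  refine Finset.sum_congr rfl ?_
  intro u hu
  rw [Finset.sum_Ico_eq_sum_range]
  refine Finset.sum_congr rfl ?_
  intro k _
  rw [Nat.add_sub_cancel_left]

noncomputable def Mg (y : R) (g : ℕ → R) (n : ℕ) : R :=
  ∑ j ∈ range (n+1), ((2^(n-j) * n.choose j : ℕ) : R) * y^(n-j) * g j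

noncomputable def Qg (y : R) (g : ℕ → R) (n : ℕ) : R := y^(n+1) + Mg y g n

lemma CM (y : R) (g : ℕ → R) (N : ℕ) :
    ∑ p ∈ range (N+1), Mg y g p * Mg y g (N-p)
      = ∑ i ∈ range (N+1), (((N+1).choose (i+1) * 2^(N-i) : ℕ) : R) * y^(N-i)
          * ∑ u ∈ range (i+1), g u * g (i-u) := by
  have step1 : ∀ p ∈ range (N+1),
      Mg y g p * Mg y g (N-p)
        = ∑ j ∈ range (N+1), ∑ k ∈ range (N+1),
            ((p.choose j * (N-p).choose k * 2^(N-j-k) : ℕ) : R) * y^(N-j-k) * (g j * g k) := by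
    intro p hp
    rw [Finset.mem_range] at hp
    unfold Mg
    rw [Finset.sum_mul_sum]
    refine Eq.trans (Finset.sum_subset (Finset.range_subset_range.mpr
      (by omega : p+1 ≤ N+1)) ?_) ?_
    · intro j hj hnj
      rw [Finset.mem_range] at hj hnj
      refine Finset.sum_eq_zero fun k _ => ?_
      rw [Nat.choose_eq_zero_of_lt (by omega : p < j)]
      push_cast
      ring
    · refine Finset.sum_congr rfl fun j hj => ?_
      rw [Finset.mem_range] at hj
      refine Eq.trans (Finset.sum_subset (Finset.range_subset_range.mpr
        (by omega : N-p+1 ≤ N+1)) ?_) ?_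
      · intro k hk hnk
        rw [Finset.mem_range] at hk hnk
        rw [Nat.choose_eq_zero_of_lt (by omega : N-p < k)]
        push_cast
        ring
      · refine Finset.sum_congr rfl fun k hk => ?_
        rw [Finset.mem_range] at hk
        rcases le_or_gt j p with hjp | hjp
        · rcases le_or_gt k (N-p) with hkp | hkp
          · have e1 : N-j-k = (p-j) + (N-p-k) := by omega
            rw [e1, pow_add, pow_add]
            push_cast
            ring
          · rw [Nat.choose_eq_zero_of_lt hkp]
            push_cast
            ring
        · rw [Nat.choose_eq_zero_of_lt hjp]
          push_cast
          ring
  rw [Finset.sum_congr rfl step1]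
  rw [Finset.sum_comm]
  have step2 : ∀ j ∈ range (N+1),
      ∑ p ∈ range (N+1), ∑ k ∈ range (N+1),
          ((p.choose j * (N-p).choose k * 2^(N-j-k) : ℕ) : R) * y^(N-j-k) * (g j * g k)
        = ∑ k ∈ range (N+1),
            (((N+1).choose (j+k+1) * 2^(N-j-k) : ℕ) : R) * y^(N-j-k) * (g j * g k) := by
    intro j _
    rw [Finset.sum_comm]
    refine Finset.sum_congr rfl fun k _ => ?_
    rw [← Finset.sum_mul, ← Finset.sum_mul, ← Nat.cast_sum, ← Finset.sum_mul, keyV]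
  rw [Finset.sum_congr rfl step2]
  rw [sq_diag (fun j k => (((N+1).choose (j+k+1) * 2^(N-j-k) : ℕ) : R) * y^(N-j-k) * (g j * g k))
    N (by
      intro j k h
      show (((N+1).choose (j+k+1) * 2^(N-j-k) : ℕ) : R) * y^(N-j-k) * (g j * g k) = 0
      rw [Nat.choose_eq_zero_of_lt (by omega : N+1 < j+k+1)]
      push_cast
      ring)]
  refine Finset.sum_congr rfl fun i hi => ?_
  rw [Finset.mem_range] at hi
  rw [Finset.mul_sum]
  refine Finset.sum_congr rfl fun u hu => ?_
  rw [Finset.mem_range] at hu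
  have e1 : u + (i-u) + 1 = i + 1 := by omega
  have e2 : N - u - (i-u) = N - i := by omega
  rw [e1, e2]

lemma S1 (y : R) (g : ℕ → R) (n : ℕ) :
    Mg y g (n+1) = 2*y*Mg y g n
      + ∑ i ∈ range (n+1), ((2^(n-i) * n.choose i : ℕ) : R) * y^(n-i) * g (i+1) := by
  have hsplit : Mg y g (n+1)
      = (∑ i ∈ range (n+1), ((2^(n-i) * (n+1).choose (i+1) : ℕ) : R) * y^(n-i) * g (i+1))
        + ((2^(n+1) : ℕ) : R) * y^(n+1) * g 0 := by
    unfold Mg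
    rw [Finset.sum_range_succ']
    congr 1
    · refine Finset.sum_congr rfl fun i hi => ?_
      simp [Nat.succ_sub_succ_eq_sub]
    · simp
  rw [hsplit]
  have hB : ∑ i ∈ range (n+1), ((2^(n-i) * (n+1).choose (i+1) : ℕ) : R) * y^(n-i) * g (i+1)
      = (∑ i ∈ range (n+1), ((2^(n-i) * n.choose i : ℕ) : R) * y^(n-i) * g (i+1))
        + ∑ i ∈ range (n+1), ((2^(n-i) * n.choose (i+1) : ℕ) : R) * y^(n-i) * g (i+1) := by
    rw [← Finset.sum_add_distrib]
    refine Finset.sum_congr rfl fun i _ => ?_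
    rw [Nat.choose_succ_succ n i]
    push_cast
    ring
  rw [hB]
  have h1 : ∑ j ∈ range (n+2), ((2^(n+1-j) * n.choose j : ℕ) : R) * y^(n+1-j) * g j
      = 2*y*Mg y g n := by
    rw [Finset.sum_range_succ, Nat.choose_eq_zero_of_lt (by omega : n < n+1)]
    unfold Mg
    rw [Finset.mul_sum]
    simp only [Nat.mul_zero, Nat.cast_zero, zero_mul, add_zero]
    refine Finset.sum_congr rfl fun j hj => ?_
    rw [Finset.mem_range] at hj
    have e : n+1-j = (n-j)+1 := by omega
    rw [e, pow_succ, pow_succ]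
    push_cast
    ring
  have hC : (∑ i ∈ range (n+1), ((2^(n-i) * n.choose (i+1) : ℕ) : R) * y^(n-i) * g (i+1))
      + ((2^(n+1) : ℕ) : R) * y^(n+1) * g 0 = 2*y*Mg y g n := by
    rw [← h1]
    conv_rhs => rw [Finset.sum_range_succ']
    congr 1
    · refine Finset.sum_congr rfl fun i hi => ?_
      simp [Nat.succ_sub_succ_eq_sub]
    · simp
  linear_combination hC

lemma S1' (y : R) (g : ℕ → R) (hg0 : g 0 = 1)
    (hrec : ∀ n, g (n+1) = (∑ i ∈ range (n+1), g i * g (n-i))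
      + y * ∑ i ∈ range n, g i * g (n-1-i)) (n : ℕ) :
    ∑ i ∈ range (n+1), ((2^(n-i) * n.choose i : ℕ) : R) * y^(n-i) * g (i+1)
      = (∑ p ∈ range (n+1), Mg y g p * Mg y g (n-p))
        - y * ∑ p ∈ range n, Mg y g p * Mg y g (n-1-p) := by
  cases n with
  | zero => simp [Mg, hrec 0, hg0]
  | succ m =>
    have hsecond : ∑ p ∈ range (m+1), Mg y g p * Mg y g (m+1-1-p)
        = ∑ p ∈ range (m+1), Mg y g p * Mg y g (m-p) := by
      simp only [Nat.add_sub_cancel]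
    rw [hsecond, CM y g (m+1), CM y g m]
    set GG : ℕ → R := fun i => ∑ u ∈ range (i+1), g u * g (i-u) with hGG
    have hT : y * ∑ i ∈ range (m+1), (((m+1).choose (i+1) * 2^(m-i) : ℕ) : R) * y^(m-i) * GG i
        = ∑ i ∈ range (m+1), ((2^(m-i) * (m+1).choose (i+1) : ℕ) : R) * y^(m-i) * (y * GG i) := by
      rw [Finset.mul_sum]
      refine Finset.sum_congr rfl fun i _ => ?_
      push_cast
      ring
    rw [hT]
    set S : R := ∑ i ∈ range (m+1),
      ((2^(m-i) * (m+1).choose (i+1) : ℕ) : R) * y^(m-i) * (y * GG i) with hS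
    have hLHS : ∑ i ∈ range (m+1+1), ((2^(m+1-i) * (m+1).choose i : ℕ) : R) * y^(m+1-i) * g (i+1)
        = (∑ i ∈ range (m+1+1), ((2^(m+1-i) * (m+1).choose i : ℕ) : R) * y^(m+1-i) * GG i) + S := by
      have e1 : ∀ i ∈ range (m+1+1),
          ((2^(m+1-i) * (m+1).choose i : ℕ) : R) * y^(m+1-i) * g (i+1)
            = ((2^(m+1-i) * (m+1).choose i : ℕ) : R) * y^(m+1-i) * GG i
              + ((2^(m+1-i) * (m+1).choose i : ℕ) : R) * y^(m+1-i)
                  * (y * ∑ u ∈ range i, g u * g (i-1-u)) := by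
        intro i _
        rw [hrec i]
        simp only [hGG]
        ring
      rw [Finset.sum_congr rfl e1, Finset.sum_add_distrib]
      congr 1
      rw [Finset.sum_range_succ']
      have e2 : ∀ i ∈ range (m+1),
          ((2^(m+1-(i+1)) * (m+1).choose (i+1) : ℕ) : R) * y^(m+1-(i+1))
              * (y * ∑ u ∈ range (i+1), g u * g (i+1-1-u))
            = ((2^(m-i) * (m+1).choose (i+1) : ℕ) : R) * y^(m-i) * (y * GG i) := by
        intro i _
        have e3 : m+1-(i+1) = m-i := by omega
        have e4 : ∑ u ∈ range (i+1), g u * g (i+1-1-u) = GG i := by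
          simp only [hGG, Nat.add_sub_cancel]
        rw [e3, e4]
      rw [Finset.sum_congr rfl e2]
      have e5 : (((2^(m+1-0) * (m+1).choose 0 : ℕ)) : R) * y^(m+1-0)
          * (y * ∑ u ∈ range 0, g u * g (0-1-u)) = 0 := by simp
      rw [e5, add_zero, hS]
    rw [hLHS]
    have hE : ∑ i ∈ range (m+1+1), (((m+1+1).choose (i+1) * 2^(m+1-i) : ℕ) : R) * y^(m+1-i) * GG i
        = (∑ i ∈ range (m+1+1), ((2^(m+1-i) * (m+1).choose i : ℕ) : R) * y^(m+1-i) * GG i)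
          + ∑ i ∈ range (m+1+1), (((m+1).choose (i+1) * 2^(m+1-i) : ℕ) : R) * y^(m+1-i) * GG i := by
      rw [← Finset.sum_add_distrib]
      refine Finset.sum_congr rfl fun i _ => ?_
      rw [Nat.choose_succ_succ (m+1) i]
      push_cast
      ring
    rw [hE]
    have hB2 : ∑ i ∈ range (m+1+1), (((m+1).choose (i+1) * 2^(m+1-i) : ℕ) : R) * y^(m+1-i) * GG i
        = S + S := by
      rw [Finset.sum_range_succ, Nat.choose_eq_zero_of_lt (by omega : m+1 < m+1+1)]
      simp only [Nat.zero_mul, Nat.cast_zero, zero_mul, add_zero]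
      rw [hS, ← Finset.sum_add_distrib]
      refine Finset.sum_congr rfl fun i hi => ?_
      rw [Finset.mem_range] at hi
      have e : m+1-i = (m-i)+1 := by omega
      rw [e, pow_succ, pow_succ]
      push_cast
      ring
    rw [hB2]
    ring

lemma Brec (y : R) (g : ℕ → R) (hg0 : g 0 = 1)
    (hrec : ∀ n, g (n+1) = (∑ i ∈ range (n+1), g i * g (n-i))
      + y * ∑ i ∈ range n, g i * g (n-1-i)) (n : ℕ) :
    Qg y g (n+1) = (∑ p ∈ range (n+1), Qg y g p * Qg y g (n-p))
      - y * ∑ p ∈ range n, Qg y g p * Qg y g (n-1-p) := by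
  have h1 : ∑ p ∈ range (n+1), Qg y g p * Qg y g (n-p)
      = (n+1 : ℕ) * y^(n+2) + 2 * ∑ p ∈ range (n+1), y^(p+1) * Mg y g (n-p)
        + ∑ p ∈ range (n+1), Mg y g p * Mg y g (n-p) := by
    have e1 : ∀ p ∈ range (n+1), Qg y g p * Qg y g (n-p)
        = y^(n+2) + y^(p+1) * Mg y g (n-p) + y^(n-p+1) * Mg y g p
          + Mg y g p * Mg y g (n-p) := by
      intro p hp
      rw [Finset.mem_range] at hp
      unfold Qg
      have e : y^(p+1) * y^(n-p+1) = y^(n+2) := by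
        rw [← pow_add]; congr 1; omega
      linear_combination e
    rw [Finset.sum_congr rfl e1]
    simp only [Finset.sum_add_distrib, Finset.sum_const, Finset.card_range, nsmul_eq_mul]
    have e2 : ∑ p ∈ range (n+1), y^(p+1) * Mg y g (n-p)
        = ∑ p ∈ range (n+1), y^(n-p+1) * Mg y g p := by
      rw [← Finset.sum_range_reflect]
      refine Finset.sum_congr rfl fun p hp => ?_
      rw [Finset.mem_range] at hp
      have ea : n+1-1-p = n-p := by omega
      rw [ea]
      have eb : n-(n-p) = p := by omega
      rw [eb]
    rw [← e2]
    push_cast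
    ring
  have h2 : ∑ p ∈ range n, Qg y g p * Qg y g (n-1-p)
      = (n : ℕ) * y^(n+1) + 2 * ∑ p ∈ range n, y^(p+1) * Mg y g (n-1-p)
        + ∑ p ∈ range n, Mg y g p * Mg y g (n-1-p) := by
    have e1 : ∀ p ∈ range n, Qg y g p * Qg y g (n-1-p)
        = y^(n+1) + y^(p+1) * Mg y g (n-1-p) + y^(n-1-p+1) * Mg y g p
          + Mg y g p * Mg y g (n-1-p) := by
      intro p hp
      rw [Finset.mem_range] at hp
      unfold Qg
      have e : y^(p+1) * y^(n-1-p+1) = y^(n+1) := by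
        rw [← pow_add]; congr 1; omega
      linear_combination e
    rw [Finset.sum_congr rfl e1]
    simp only [Finset.sum_add_distrib, Finset.sum_const, Finset.card_range, nsmul_eq_mul]
    have e2 : ∑ p ∈ range n, y^(p+1) * Mg y g (n-1-p)
        = ∑ p ∈ range n, y^(n-1-p+1) * Mg y g p := by
      rw [← Finset.sum_range_reflect]
      refine Finset.sum_congr rfl fun p hp => ?_
      rw [Finset.mem_range] at hp
      have eb : n-1-(n-1-p) = p := by omega
      rw [eb]
    rw [← e2]
    push_cast
    ring
  have h3 : ∑ p ∈ range (n+1), y^(p+1) * Mg y g (n-p)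
      = y * (∑ p ∈ range n, y^(p+1) * Mg y g (n-1-p)) + y * Mg y g n := by
    rw [Finset.sum_range_succ', Finset.mul_sum]
    congr 1
    · refine Finset.sum_congr rfl fun p hp => ?_
      have e : n - (p+1) = n-1-p := by omega
      rw [e, pow_succ]
      ring
    · rw [pow_one, Nat.sub_zero]
  have hS1 := S1 y g n
  have hS1' := S1' y g hg0 hrec n
  have hQ : Qg y g (n+1) = y^(n+2) + Mg y g (n+1) := rfl
  rw [hQ, hS1, hS1', h1, h2, h3]
  push_cast
  ring

end Generic

lemma reflect_sum {N : ℕ} {s : Finset ℕ} (f : ℕ → Polynomial ℚ) :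
    reflect N (∑ i ∈ s, f i) = ∑ i ∈ s, reflect N (f i) := by
  ext m
  rw [Polynomial.coeff_reflect, Polynomial.finset_sum_coeff, Polynomial.finset_sum_coeff]
  exact Finset.sum_congr rfl fun i _ => (Polynomial.coeff_reflect _ _ _).symm

noncomputable def Hp (n : ℕ) : Polynomial ℚ := reflect (n+1) (gPoly n)

lemma Hp0 : Hp 0 = X := by
  unfold Hp
  rw [gPoly_zero, Polynomial.reflect_one, pow_one]

lemma refl1 : reflect 1 (X - 1 : Polynomial ℚ) = 1 - X := by
  rw [Polynomial.reflect_sub, Polynomial.reflect_one, pow_one, Polynomial.reflect_one_X]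

lemma Hrec (n : ℕ) : Hp (n+1) = (∑ i ∈ range (n+1), Hp i * Hp (n-i))
    - (X - 1) * ∑ i ∈ range n, Hp i * Hp (n-1-i) := by
  unfold Hp
  rw [R1 n, Polynomial.reflect_add]
  have hA : reflect (n+2) (∑ i ∈ range (n+1), gPoly i * gPoly (n-i))
      = ∑ i ∈ range (n+1), reflect (i+1) (gPoly i) * reflect (n-i+1) (gPoly (n-i)) := by
    rw [reflect_sum]
    refine Finset.sum_congr rfl fun i hi => ?_
    rw [Finset.mem_range] at hi
    have e : n+2 = (i+1) + (n-i+1) := by omega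
    rw [e, Polynomial.reflect_mul _ _ (le_trans (gPoly_natDegree_le i) (by omega))
      (le_trans (gPoly_natDegree_le (n-i)) (by omega))]
  have hB : reflect (n+2) ((X - 1) * ∑ i ∈ range n, gPoly i * gPoly (n-1-i))
      = (1 - X) * ∑ i ∈ range n, reflect (i+1) (gPoly i) * reflect (n-1-i+1) (gPoly (n-1-i)) := by
    have e : (n+2 : ℕ) = 1 + (n+1) := by omega
    have hdeg : (∑ i ∈ range n, gPoly i * gPoly (n-1-i)).natDegree ≤ n+1 := by
      refine Polynomial.natDegree_sum_le_of_forall_le _ _ fun i hi => ?_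
      rw [Finset.mem_range] at hi
      refine le_trans (Polynomial.natDegree_mul_le) ?_
      have := gPoly_natDegree_le i
      have := gPoly_natDegree_le (n-1-i)
      omega
    have hdeg1 : (X - 1 : Polynomial ℚ).natDegree ≤ 1 := by
      rw [← Polynomial.C_1, Polynomial.natDegree_X_sub_C]
    rw [e, Polynomial.reflect_mul _ _ hdeg1 hdeg, refl1, reflect_sum]
    congr 1
    refine Finset.sum_congr rfl fun i hi => ?_
    rw [Finset.mem_range] at hi
    have e2 : n+1 = (i+1) + (n-1-i+1) := by omega
    rw [e2, Polynomial.reflect_mul _ _ (le_trans (gPoly_natDegree_le i) (by omega))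
      (le_trans (gPoly_natDegree_le (n-1-i)) (by omega))]
  rw [hA, hB]
  ring

lemma unique (u v : ℕ → Polynomial ℚ) (h0 : u 0 = v 0)
    (hu : ∀ n, u (n+1) = (∑ i ∈ range (n+1), u i * u (n-i))
      - (X-1) * ∑ i ∈ range n, u i * u (n-1-i))
    (hv : ∀ n, v (n+1) = (∑ i ∈ range (n+1), v i * v (n-i))
      - (X-1) * ∑ i ∈ range n, v i * v (n-1-i)) : ∀ n, u n = v n := by
  intro n
  induction n using Nat.strong_induction_on with
  | _ n ih =>
    cases n with
    | zero => exact h0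
    | succ m =>
      rw [hu, hv]
      congr 1
      · refine Finset.sum_congr rfl fun i hi => ?_
        rw [Finset.mem_range] at hi
        rw [ih i (by omega), ih (m-i) (by omega)]
      · congr 1
        refine Finset.sum_congr rfl fun i hi => ?_
        rw [Finset.mem_range] at hi
        rw [ih i (by omega), ih (m-1-i) (by omega)]

lemma Qpoly0_eq (n : ℕ) : Qpoly n 0 = Qg (X - 1 : Polynomial ℚ) gPoly n := by
  unfold Qpoly Qg Mg
  rw [if_pos rfl]
  simp only [Polynomial.C_eq_natCast]

lemma Qpoly00 : Qpoly 0 0 = X := by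
  rw [Qpoly0_eq]
  show (X - 1 : Polynomial ℚ)^(0+1) + Mg _ gPoly 0 = X
  unfold Mg
  simp [gPoly_zero]

lemma main (n : ℕ) : Qpoly n 0 = Hp n := by
  refine unique (fun n => Qpoly n 0) Hp ?_ ?_ Hrec n
  · show Qpoly 0 0 = Hp 0
    rw [Qpoly00, Hp0]
  · intro m
    simp only [Qpoly0_eq]
    exact Brec (X-1 : Polynomial ℚ) gPoly gPoly_zero R1 m

end S12

/-- For every `d ≥ 0` and `0 ≤ ℓ ≤ d+1`, the coefficient of `x^ℓ` in
`Q_{d,d+1}(x)` equals the coefficient of `x^{d+1-ℓ}` in `Q_{d,0}(x)`. -/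
theorem stmt12 (d l : ℕ) (hl : l ≤ d + 1) :
    (Qpoly d (d + 1)).coeff l = (Qpoly d 0).coeff (d + 1 - l) := by
  have h1 : Qpoly d (d+1) = gPoly d := by
    unfold Qpoly
    rw [if_neg (by omega), if_neg (by omega)]
  rw [h1, S12.main d]
  unfold S12.Hp
  rw [Polynomial.coeff_reflect, Polynomial.revAt_le (by omega : d+1-l ≤ d+1)]
  congr 1
  omega
end
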